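/- arXiv:2311.15348 — 6 statements merged into one kernel-verified Lean document; each statement's English description precedes it below -/
import Mathlib

section
/- For all real numbers a and b and every real n ≥ 2, one has |a - b|^n ≤ 2^n · (|a|^(n-2)·a - |b|^(n-2)·b) · (a - b). -/
private lemma simon_aux (n : ℝ) (hn : 2 ≤ n) (a b : ℝ) (hab : b < a) (hba : |b| ≤ |a|) :
    |a - b| ^ n ≤ 2 ^ n * ((|a| ^ (n - 2) * a - |b| ^ (n - 2) * b) * (a - b)) := by
  have ha : 0 < a := by
    rcases le_or_gt a 0 with h | h
    · have hb0 : b < 0 := lt_of_lt_of_le hab h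
      rw [abs_of_neg hb0] at hba
      rcases lt_or_eq_of_le h with h' | h'
      · rw [abs_of_neg h'] at hba; linarith
      · simp [h'] at hba; linarith
    · exact h
  have haa : |a| = a := abs_of_pos ha
  have hx : 0 < a - b := sub_pos.2 hab
  have habs : |a - b| = a - b := abs_of_pos hx
  rw [habs, haa]
  have han : 0 ≤ a ^ (n - 2) := Real.rpow_nonneg ha.le _
  have h2a : a - b ≤ 2 * a := by
    have : -b ≤ |b| := neg_le_abs b
    rw [haa] at hba; linarith
  -- key: a^(n-2)*(a-b) ≤ 2*(a^(n-2)*a - |b|^(n-2)*b)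
  have hkey : a ^ (n - 2) * (a - b) ≤ 2 * (a ^ (n - 2) * a - |b| ^ (n - 2) * b) := by
    rcases le_or_gt 0 b with hb | hb
    · rw [abs_of_nonneg hb]
      have hmono : b ^ (n - 2) ≤ a ^ (n - 2) :=
        Real.rpow_le_rpow hb hab.le (by linarith)
      have hφ : b ^ (n - 2) * b ≤ a ^ (n - 2) * b := mul_le_mul_of_nonneg_right hmono hb
      nlinarith [mul_nonneg han hx.le]
    · have hbb : 0 ≤ |b| ^ (n - 2) * (-b) :=
        mul_nonneg (Real.rpow_nonneg (abs_nonneg b) _) (by linarith)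
      have h1 : a ^ (n - 2) * (a - b) ≤ a ^ (n - 2) * (2 * a) :=
        mul_le_mul_of_nonneg_left h2a han
      nlinarith
  have hprod : 0 ≤ (a ^ (n - 2) * a - |b| ^ (n - 2) * b) * (a - b) := by
    nlinarith [mul_nonneg han hx.le]
  have h1 : (a - b) ^ n = (a - b) ^ (n - 2) * (a - b) ^ (2 : ℝ) := by
    rw [← Real.rpow_add hx]; norm_num
  have h4 : (a - b) ^ (2 : ℝ) = (a - b) * (a - b) := by
    rw [show (2 : ℝ) = ((2 : ℕ) : ℝ) by norm_num, Real.rpow_natCast]; ring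
  have h2 : (a - b) ^ (n - 2) ≤ (2 * a) ^ (n - 2) :=
    Real.rpow_le_rpow hx.le h2a (by linarith)
  have h3 : (2 * a) ^ (n - 2) = 2 ^ (n - 2) * a ^ (n - 2) :=
    Real.mul_rpow (by norm_num) ha.le
  have h2n : (0 : ℝ) < 2 ^ (n - 2) := Real.rpow_pos_of_pos (by norm_num) _
  have hpow1 : (2 : ℝ) ^ (n - 2) * 2 = 2 ^ (n - 1) := by
    rw [show (2:ℝ) ^ (n-2) * 2 = 2 ^ (n-2) * 2 ^ (1:ℝ) by norm_num,
      ← Real.rpow_add (by norm_num : (0:ℝ) < 2)]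
    congr 1; ring
  have hpow2 : (2 : ℝ) ^ (n - 1) ≤ 2 ^ n :=
    Real.rpow_le_rpow_of_exponent_le (by norm_num) (by linarith)
  calc (a - b) ^ n = (a - b) ^ (n - 2) * ((a - b) * (a - b)) := by rw [h1, h4]
    _ ≤ 2 ^ (n - 2) * a ^ (n - 2) * ((a - b) * (a - b)) := by
        apply mul_le_mul_of_nonneg_right _ (by nlinarith)
        rw [← h3]; exact h2
    _ = 2 ^ (n - 2) * (a - b) * (a ^ (n - 2) * (a - b)) := by ring
    _ ≤ 2 ^ (n - 2) * (a - b) * (2 * (a ^ (n - 2) * a - |b| ^ (n - 2) * b)) := by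
        apply mul_le_mul_of_nonneg_left hkey
        positivity
    _ = 2 ^ (n - 2) * 2 * ((a ^ (n - 2) * a - |b| ^ (n - 2) * b) * (a - b)) := by ring
    _ = 2 ^ (n - 1) * ((a ^ (n - 2) * a - |b| ^ (n - 2) * b) * (a - b)) := by rw [hpow1]
    _ ≤ 2 ^ n * ((a ^ (n - 2) * a - |b| ^ (n - 2) * b) * (a - b)) :=
        mul_le_mul_of_nonneg_right hpow2 hprod

/-- Simon's inequality (one-dimensional real case, `n ≥ 2`):
`|a - b|^n ≤ 2^n * ((|a|^(n-2)*a - |b|^(n-2)*b) * (a - b))`. -/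
theorem simon_inequality_ge_two (a b n : ℝ) (hn : 2 ≤ n) :
    |a - b| ^ n ≤ 2 ^ n * ((|a| ^ (n - 2) * a - |b| ^ (n - 2) * b) * (a - b)) := by
  rcases eq_or_ne a b with rfl | hne
  · simp [Real.zero_rpow (by linarith : n ≠ 0)]
  rcases hne.lt_or_gt with hab | hab
  · -- a < b
    rw [abs_sub_comm]
    rcases le_or_gt |a| |b| with h | h
    · have hh := simon_aux n hn b a hab h
      exact hh.trans (le_of_eq (by ring))
    · have hh := simon_aux n hn (-a) (-b) (by linarith) (by rw [abs_neg, abs_neg]; exact h.le)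
      rw [show -a - -b = b - a from by ring, abs_neg, abs_neg] at hh
      exact hh.trans (le_of_eq (by ring))
  · -- b < a
    rcases le_or_gt |b| |a| with h | h
    · exact simon_aux n hn a b hab h
    · have hh := simon_aux n hn (-b) (-a) (by linarith) (by rw [abs_neg, abs_neg]; exact h.le)
      rw [show -b - -a = a - b from by ring, abs_neg, abs_neg] at hh
      exact hh.trans (le_of_eq (by ring))
end

section
/- For all real numbers a and b with (|a|,|b|) ≠ (0,0) and every real n with 1 < n < 2, one has |a - b|^n ≤ (1/(n-1)) · ((|a|^(n-2)·a - |b|^(n-2)·b)·(a - b))^(n/2) · (|a|^n + |b|^n)^((2-n)/2). -/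
open Real

/-- subadditivity of rpow with exponent in [0,1], real version -/
lemma simon_aux_add_rpow {x y p : ℝ} (hx : 0 ≤ x) (hy : 0 ≤ y) (hp : 0 ≤ p) (hp1 : p ≤ 1) :
    (x + y) ^ p ≤ x ^ p + y ^ p := by
  lift x to NNReal using hx with x
  lift y to NNReal using hy with y
  exact_mod_cast NNReal.rpow_add_le_add_rpow x y hp hp1

/-- tangent line / Bernoulli: for 0 ≤ y ≤ x and 0 < s ≤ 1, s·x^(s-1)·(x-y) ≤ x^s - y^s -/
lemma simon_aux_bern {x y s : ℝ} (hy : 0 ≤ y) (hxy : y ≤ x) (hs0 : 0 < s) (hs1 : s ≤ 1) :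
    s * x ^ (s - 1) * (x - y) ≤ x ^ s - y ^ s := by
  rcases eq_or_lt_of_le (hy.trans hxy) with hx0 | hx0
  · have : x = 0 := hx0.symm
    subst this
    have : y = 0 := le_antisymm hxy hy
    subst this
    simp
  · set t : ℝ := y / x with ht
    have ht0 : 0 ≤ t := div_nonneg hy hx0.le
    have ht1 : t ≤ 1 := (div_le_one hx0).mpr hxy
    have hb : (1 + (t - 1)) ^ s ≤ 1 + s * (t - 1) :=
      rpow_one_add_le_one_add_mul_self (by linarith) hs0.le hs1
    rw [show (1:ℝ) + (t - 1) = t by ring] at hb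
    have hxs : 0 < x ^ s := Real.rpow_pos_of_pos hx0 s
    have hys : t ^ s * x ^ s = y ^ s := by
      rw [ht, Real.div_rpow hy hx0.le, div_mul_cancel₀ _ hxs.ne']
    have hmul := mul_le_mul_of_nonneg_right hb hxs.le
    have hxx : x ^ (s - 1) * x = x ^ s := by
      rw [← Real.rpow_add_one hx0.ne' (s-1)]
      ring_nf
    have htx : t * x = y := div_mul_cancel₀ y hx0.ne'
    calc s * x ^ (s - 1) * (x - y)
        = x ^ s - (1 + s * (t - 1)) * x ^ s := by
          rw [← hxx, ← htx]; ring
      _ ≤ x ^ s - t ^ s * x ^ s := by linarith [hmul]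
      _ = x ^ s - y ^ s := by rw [hys]

/-- signed power combine: for 0 ≤ b, b^(p-2) * b = b^(p-1) -/
lemma simon_aux_sp {b p : ℝ} (hb : 0 ≤ b) (hp : 1 < p) : b ^ (p - 2) * b = b ^ (p - 1) := by
  rcases eq_or_lt_of_le hb with h0 | h0
  · rw [← h0, mul_zero, Real.zero_rpow (by linarith : (0:ℝ) < p - 1).ne']
  · rw [show p - 1 = (p - 2) + 1 by ring, Real.rpow_add_one h0.ne']

/-- key case: 0 < a, |b| ≤ a -/
lemma simon_key {a b p : ℝ} (ha : 0 < a) (hba : |b| ≤ a) (h1 : 1 < p) (h2 : p < 2) :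
    (p - 1) * (a - b) ^ 2 * (a ^ 2 + b ^ 2) ^ ((p - 2) / 2) ≤
      (|a| ^ (p - 2) * a - |b| ^ (p - 2) * b) * (a - b) := by
  have haa : |a| = a := abs_of_pos ha
  -- (a^2+b^2)^((p-2)/2) ≤ a^(p-2)
  have hstep : (a ^ 2 + b ^ 2) ^ ((p - 2) / 2) ≤ a ^ (p - 2) := by
    have h := Real.rpow_le_rpow_of_nonpos (pow_pos ha 2)
      (by nlinarith [sq_nonneg b] : a ^ 2 ≤ a ^ 2 + b ^ 2) (by linarith : (p-2)/2 ≤ 0)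
    calc (a ^ 2 + b ^ 2) ^ ((p - 2) / 2) ≤ (a ^ 2) ^ ((p - 2) / 2) := h
      _ = a ^ (p - 2) := by
          rw [← Real.rpow_natCast a 2, ← Real.rpow_mul ha.le]
          congr 1
          push_cast; ring
  have hrp2 : (0:ℝ) ≤ (a ^ 2 + b ^ 2) ^ ((p - 2) / 2) := Real.rpow_nonneg (by positivity) _
  rcases le_or_gt 0 b with hb | hb
  · -- same sign
    have hbb : |b| = b := abs_of_nonneg hb
    have hba' : b ≤ a := by rwa [hbb] at hba
    rw [haa, hbb, simon_aux_sp ha.le h1, simon_aux_sp hb h1]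
    have hbern := simon_aux_bern hb hba' (by linarith : (0:ℝ) < p - 1) (by linarith)
    rw [show p - 1 - 1 = p - 2 by ring] at hbern
    have hab0 : 0 ≤ a - b := by linarith
    have hrp2' : 0 ≤ a ^ (p - 2) := (Real.rpow_pos_of_pos ha _).le
    nlinarith [mul_le_mul_of_nonneg_right hbern hab0,
      mul_le_mul_of_nonneg_right hstep (mul_nonneg (by positivity) (sq_nonneg (a-b)))]
  · -- opposite signs: c = -b
    have hbb : |b| = -b := abs_of_neg hb
    have hcb : -b ≤ a := by rwa [hbb] at hba
    rw [haa, hbb]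
    have hc0 : (0:ℝ) < -b := by linarith
    -- (-b)^(p-2)*(-b) = (-b)^(p-1), and a^(p-2) ≤ (-b)^(p-2)
    have h1' : (-b) ^ (p - 2) * (-b) = (-b) ^ (p - 1) := simon_aux_sp hc0.le h1
    have h2' : a ^ (p - 2) ≤ (-b) ^ (p - 2) :=
      Real.rpow_le_rpow_of_nonpos hc0 hcb (by linarith)
    have h3' : a ^ (p - 2) * a = a ^ (p - 1) := simon_aux_sp ha.le h1
    -- goal: (p-1)(a-b)^2 * S ≤ (a^(p-2)*a + (-b)^(p-2)*(-b))*(a-b)  [since -((-b)^(p-2))*b = ...]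
    have key : (p - 1) * (a - b) * a ^ (p - 2) ≤ a ^ (p - 1) + (-b) ^ (p - 1) := by
      have e1 : (p - 1) * (a - b) * a ^ (p - 2)
          = (p - 1) * (a ^ (p - 1) + (-b) * a ^ (p - 2)) := by
        rw [← h3']; ring
      have e2 : (-b) * a ^ (p - 2) ≤ (-b) ^ (p - 1) := by
        calc (-b) * a ^ (p - 2) ≤ (-b) * (-b) ^ (p - 2) :=
              mul_le_mul_of_nonneg_left h2' hc0.le
          _ = (-b) ^ (p - 1) := by rw [mul_comm]; exact h1'
      have hap : 0 ≤ a ^ (p - 1) := (Real.rpow_pos_of_pos ha _).le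
      have hbp : 0 ≤ (-b) ^ (p - 1) := (Real.rpow_pos_of_pos hc0 _).le
      have hba2 : (-b) * a ^ (p-2) ≥ 0 := mul_nonneg hc0.le (Real.rpow_pos_of_pos ha _).le
      nlinarith
    have hab0 : 0 ≤ a - b := by linarith
    have hstep2 : (p - 1) * (a - b) ^ 2 * (a ^ 2 + b ^ 2) ^ ((p - 2) / 2)
        ≤ (p - 1) * (a - b) ^ 2 * a ^ (p - 2) :=
      mul_le_mul_of_nonneg_left hstep (mul_nonneg (by linarith) (sq_nonneg _))
    have := mul_le_mul_of_nonneg_right key hab0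
    nlinarith [this, hstep2]

/-- half: |b| ≤ |a| -/
lemma simon_half {a b p : ℝ} (hba : |b| ≤ |a|) (hab : ¬(a = 0 ∧ b = 0)) (h1 : 1 < p) (h2 : p < 2) :
    (p - 1) * (a - b) ^ 2 * (a ^ 2 + b ^ 2) ^ ((p - 2) / 2) ≤
      (|a| ^ (p - 2) * a - |b| ^ (p - 2) * b) * (a - b) := by
  have ha0 : a ≠ 0 := by
    rintro rfl
    simp only [abs_zero] at hba
    exact hab ⟨rfl, abs_nonpos_iff.mp hba⟩
  rcases lt_or_gt_of_ne ha0 with ha | ha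
  · -- a < 0: apply to (-a, -b)
    have h := simon_key (a := -a) (b := -b) (by linarith)
      (by rw [abs_neg]; rw [abs_of_neg ha] at hba; exact hba) h1 h2
    rw [abs_neg, abs_neg, neg_sq, neg_sq] at h
    linear_combination h
  · have h := simon_key (a := a) (b := b) ha (by rwa [abs_of_pos ha] at hba) h1 h2
    exact h

/-- core inequality -/
lemma simon_core {a b p : ℝ} (hab : ¬(a = 0 ∧ b = 0)) (h1 : 1 < p) (h2 : p < 2) :
    (p - 1) * (a - b) ^ 2 * (a ^ 2 + b ^ 2) ^ ((p - 2) / 2) ≤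
      (|a| ^ (p - 2) * a - |b| ^ (p - 2) * b) * (a - b) := by
  rcases le_total |b| |a| with h | h
  · exact simon_half h hab h1 h2
  · have hab' : ¬(b = 0 ∧ a = 0) := fun ⟨hb, ha⟩ => hab ⟨ha, hb⟩
    have := simon_half (a := b) (b := a) h hab' h1 h2
    rw [add_comm (b ^ 2)] at this
    linear_combination this

/-- Simon's inequality (one-dimensional real case, `1 < n < 2`). -/
theorem simon_inequality_lt_two (a b n : ℝ) (hab : ¬ (a = 0 ∧ b = 0))
    (hn1 : 1 < n) (hn2 : n < 2) :
    |a - b| ^ n ≤ (1 / (n - 1)) *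
      ((|a| ^ (n - 2) * a - |b| ^ (n - 2) * b) * (a - b)) ^ (n / 2) *
      (|a| ^ n + |b| ^ n) ^ ((2 - n) / 2) := by
  set D := (|a| ^ (n - 2) * a - |b| ^ (n - 2) * b) * (a - b) with hD
  set Q := |a| ^ n + |b| ^ n with hQdef
  have hs2 : (0:ℝ) < a ^ 2 + b ^ 2 := by
    rcases not_and_or.mp hab with h | h <;> positivity
  have hn1' : (0:ℝ) < n - 1 := by linarith
  have hn0 : (0:ℝ) < n := by linarith
  have hcore := simon_core hab hn1 hn2
  have hD0 : 0 ≤ D := le_trans (by positivity) hcore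
  have hQ0 : (0:ℝ) < Q := by
    rcases not_and_or.mp hab with h | h
    · have h1 : 0 < |a| ^ n := Real.rpow_pos_of_pos (abs_pos.mpr h) n
      have h2 : 0 ≤ |b| ^ n := Real.rpow_nonneg (abs_nonneg b) n
      rw [hQdef]; linarith
    · have h1 : 0 < |b| ^ n := Real.rpow_pos_of_pos (abs_pos.mpr h) n
      have h2 : 0 ≤ |a| ^ n := Real.rpow_nonneg (abs_nonneg a) n
      rw [hQdef]; linarith
  have hcancel : (a ^ 2 + b ^ 2) ^ ((n - 2) / 2) * (a ^ 2 + b ^ 2) ^ ((2 - n) / 2) = 1 := by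
    rw [← Real.rpow_add hs2, show (n - 2) / 2 + (2 - n) / 2 = 0 by ring, Real.rpow_zero]
  have hX0 : (0:ℝ) ≤ (a ^ 2 + b ^ 2) ^ ((2 - n) / 2) := Real.rpow_nonneg hs2.le _
  have step1 : (a - b) ^ 2 ≤ (1 / (n - 1)) * D * (a ^ 2 + b ^ 2) ^ ((2 - n) / 2) := by
    have h := mul_le_mul_of_nonneg_right hcore hX0
    rw [mul_assoc ((n-1) * (a-b)^2), hcancel, mul_one] at h
    have h2 := mul_le_mul_of_nonneg_left h (one_div_nonneg.mpr hn1'.le)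
    have e : 1 / (n - 1) * ((n - 1) * (a - b) ^ 2) = (a - b) ^ 2 := by
      field_simp
    rw [e, ← mul_assoc] at h2
    exact h2
  have step2 : (a ^ 2 + b ^ 2) ^ ((2 - n) / 2) ≤ Q ^ ((2 - n) / n) := by
    have hbase : (a ^ 2 + b ^ 2) ^ (n / 2) ≤ Q := by
      have h := simon_aux_add_rpow (x := a ^ 2) (y := b ^ 2) (p := n / 2) (sq_nonneg a)
        (sq_nonneg b) (by linarith) (by linarith)
      have e1 : (a ^ 2) ^ (n / 2) = |a| ^ n := by
        rw [← sq_abs, ← Real.rpow_natCast |a| 2, ← Real.rpow_mul (abs_nonneg a)]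
        congr 1
        push_cast; ring
      have e2 : (b ^ 2) ^ (n / 2) = |b| ^ n := by
        rw [← sq_abs, ← Real.rpow_natCast |b| 2, ← Real.rpow_mul (abs_nonneg b)]
        congr 1
        push_cast; ring
      rw [e1, e2] at h
      exact h
    calc (a ^ 2 + b ^ 2) ^ ((2 - n) / 2)
        = ((a ^ 2 + b ^ 2) ^ (n / 2)) ^ ((2 - n) / n) := by
          rw [← Real.rpow_mul hs2.le]
          congr 1
          field_simp
      _ ≤ Q ^ ((2 - n) / n) :=
          Real.rpow_le_rpow (Real.rpow_nonneg hs2.le _) hbase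
            (div_nonneg (by linarith) (by linarith))
  have step3 : (a - b) ^ 2 ≤ (1 / (n - 1)) * D * Q ^ ((2 - n) / n) := by
    calc (a - b) ^ 2 ≤ (1 / (n - 1)) * D * (a ^ 2 + b ^ 2) ^ ((2 - n) / 2) := step1
      _ ≤ (1 / (n - 1)) * D * Q ^ ((2 - n) / n) :=
          mul_le_mul_of_nonneg_left step2 (mul_nonneg (one_div_nonneg.mpr hn1'.le) hD0)
  have habs : |a - b| ^ n = ((a - b) ^ 2) ^ (n / 2) := by
    rw [← sq_abs, ← Real.rpow_natCast |a - b| 2, ← Real.rpow_mul (abs_nonneg _)]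
    congr 1
    push_cast; ring
  rw [habs]
  calc ((a - b) ^ 2) ^ (n / 2)
      ≤ ((1 / (n - 1)) * D * Q ^ ((2 - n) / n)) ^ (n / 2) :=
        Real.rpow_le_rpow (sq_nonneg _) step3 (by linarith)
    _ = (1 / (n - 1)) ^ (n / 2) * D ^ (n / 2) * (Q ^ ((2 - n) / n)) ^ (n / 2) := by
        rw [Real.mul_rpow (mul_nonneg (one_div_nonneg.mpr hn1'.le) hD0)
          (Real.rpow_nonneg hQ0.le _),
          Real.mul_rpow (one_div_nonneg.mpr hn1'.le) hD0]
    _ = (1 / (n - 1)) ^ (n / 2) * D ^ (n / 2) * Q ^ ((2 - n) / 2) := by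
        rw [← Real.rpow_mul hQ0.le]
        congr 2
        field_simp
    _ ≤ (1 / (n - 1)) * D ^ (n / 2) * Q ^ ((2 - n) / 2) := by
        have h1x : (1:ℝ) ≤ 1 / (n - 1) := by
          rw [le_div_iff₀ hn1']; linarith
        have hle : (1 / (n - 1)) ^ (n / 2) ≤ 1 / (n - 1) := by
          calc (1 / (n - 1)) ^ (n / 2) ≤ (1 / (n - 1)) ^ (1:ℝ) :=
                Real.rpow_le_rpow_of_exponent_le h1x (by linarith)
            _ = 1 / (n - 1) := Real.rpow_one _
        have h' := mul_le_mul_of_nonneg_right hle (Real.rpow_nonneg hD0 (n / 2))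
        exact mul_le_mul_of_nonneg_right h' (Real.rpow_nonneg hQ0.le _)
end

section
/- Let (X, μ) be a measure space, K : X × X → (0, ∞) symmetric and measurable, p : X × X → ℝ symmetric measurable with 1 < p⁻ ≤ p(x,y) ≤ p⁺ < ∞, and q : X → ℝ measurable with 1 < q⁻ ≤ q ≤ q⁺ < ∞. Define W as the set of w ∈ L^{q(x)}(X) such that ∫∫ |w(x)-w(y)|^{p(x,y)} λ^{-p(x,y)} K(x,y) dμ(x)dμ(y) < ∞ for some λ > 0, with norm ‖w‖ = [w]_K + ‖w‖_{q(x)}, where [w]_K is the Gagliardo–Luxemburg seminorm. Then (W, ‖·‖) is a complete normed space. -/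
open MeasureTheory Filter

open Set

section helpers

variable {Y : Type*} [MeasurableSpace Y] {ν : Measure Y}

/-- generic modular -/
noncomputable def genMod (ν : Measure Y) (r k f : Y → ℝ) (l : ℝ) : ENNReal :=
  ∫⁻ y, ENNReal.ofReal ((|f y| / l) ^ r y * k y) ∂ν

lemma measurable_rpow_of_nonneg {a r : Y → ℝ} (ha : Measurable a) (hr : Measurable r)
    (ha0 : ∀ y, 0 ≤ a y) : Measurable fun y => a y ^ r y := by
  have h : ∀ y, a y ^ r y =
      if a y = 0 then (if r y = 0 then 1 else 0) else Real.exp (Real.log (a y) * r y) := by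
    intro y
    by_cases h0 : a y = 0
    · simp only [h0, if_true]
      by_cases hr0 : r y = 0
      · simp [hr0]
      · simp [hr0, Real.zero_rpow hr0]
    · have hpos : 0 < a y := lt_of_le_of_ne (ha0 y) (Ne.symm h0)
      simp only [h0, if_false]
      rw [Real.rpow_def_of_pos hpos]
  simp only [h]
  have hs1 : MeasurableSet {y | a y = 0} := ha (measurableSet_singleton 0)
  have hs2 : MeasurableSet {y | r y = 0} := hr (measurableSet_singleton 0)
  exact Measurable.ite hs1 (Measurable.ite hs2 measurable_const measurable_const)
    (Real.measurable_exp.comp ((Real.measurable_log.comp ha).mul hr))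

lemma measurable_genMod_integrand {r k f : Y → ℝ} (hf : Measurable f) (hr : Measurable r)
    (hk : Measurable k) {l : ℝ} (hl : 0 ≤ l) :
    Measurable fun y => ENNReal.ofReal ((|f y| / l) ^ r y * k y) := by
  refine Measurable.ennreal_ofReal (Measurable.mul ?_ hk)
  exact measurable_rpow_of_nonneg (hf.abs.div_const l) hr
    (fun y => div_nonneg (abs_nonneg _) hl)


lemma genMod_mono {r k f : Y → ℝ} {rm : ℝ} (hr0 : ∀ y, rm ≤ r y) (hrm : 0 ≤ rm)
    (hk : ∀ y, 0 ≤ k y) {l l' : ℝ} (hl : 0 < l) (hll : l ≤ l') :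
    genMod ν r k f l' ≤ genMod ν r k f l := by
  refine lintegral_mono fun y => ENNReal.ofReal_le_ofReal ?_
  refine mul_le_mul_of_nonneg_right ?_ (hk y)
  refine Real.rpow_le_rpow (div_nonneg (abs_nonneg _) (by linarith)) ?_
    (le_trans hrm (hr0 y))
  exact div_le_div_of_nonneg_left (abs_nonneg _) hl hll

lemma genMod_scale {r k f : Y → ℝ} {rm : ℝ} (hr0 : ∀ y, rm ≤ r y)
    (hk : ∀ y, 0 ≤ k y) {l c : ℝ} (hl : 0 < l) (hc : 1 ≤ c) :
    genMod ν r k f (c * l) ≤ ENNReal.ofReal (c ^ (-rm)) * genMod ν r k f l := by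
  have hc0 : (0:ℝ) < c := lt_of_lt_of_le one_pos hc
  have key : ∀ y, ENNReal.ofReal ((|f y| / (c * l)) ^ r y * k y) ≤
      ENNReal.ofReal (c ^ (-rm)) * ENNReal.ofReal ((|f y| / l) ^ r y * k y) := by
    intro y
    rw [← ENNReal.ofReal_mul (by positivity)]
    refine ENNReal.ofReal_le_ofReal ?_
    have h1 : |f y| / (c * l) = (|f y| / l) * c⁻¹ := by
      rw [mul_comm c l, div_mul_eq_div_div, div_eq_mul_inv]
    have hbase : (0:ℝ) ≤ |f y| / l := div_nonneg (abs_nonneg _) hl.le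
    have h2 : (|f y| / (c * l)) ^ r y = (|f y| / l) ^ r y * c ^ (-(r y)) := by
      rw [h1, Real.mul_rpow hbase (by positivity), Real.inv_rpow hc0.le, ← Real.rpow_neg hc0.le]
    rw [h2]
    have h3 : c ^ (-(r y)) ≤ c ^ (-rm) :=
      Real.rpow_le_rpow_of_exponent_le hc (neg_le_neg (hr0 y))
    calc (|f y| / l) ^ r y * c ^ (-(r y)) * k y
        ≤ (|f y| / l) ^ r y * c ^ (-rm) * k y := by
          refine mul_le_mul_of_nonneg_right (mul_le_mul_of_nonneg_left h3 (by positivity)) (hk y)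
      _ = c ^ (-rm) * ((|f y| / l) ^ r y * k y) := by ring
  calc genMod ν r k f (c * l)
      ≤ ∫⁻ y, ENNReal.ofReal (c ^ (-rm)) * ENNReal.ofReal ((|f y| / l) ^ r y * k y) ∂ν :=
        lintegral_mono key
    _ = ENNReal.ofReal (c ^ (-rm)) * genMod ν r k f l :=
        lintegral_const_mul' _ _ ENNReal.ofReal_ne_top

lemma genMod_exists_le_one {r k f : Y → ℝ} {rm : ℝ} (hr0 : ∀ y, rm ≤ r y) (hrm : 0 < rm)
    (hk : ∀ y, 0 ≤ k y) {l : ℝ} (hl : 0 < l) (hfin : genMod ν r k f l < ⊤) :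
    ∃ l', 0 < l' ∧ genMod ν r k f l' ≤ 1 := by
  set A := genMod ν r k f l with hA
  set c : ℝ := max 1 (A.toReal ^ rm⁻¹) with hcdef
  have hc1 : (1:ℝ) ≤ c := le_max_left _ _
  have hc0 : (0:ℝ) < c := lt_of_lt_of_le one_pos hc1
  refine ⟨c * l, by positivity, ?_⟩
  have hscale := genMod_scale (ν := ν) (f := f) hr0 hk hl hc1
  refine le_trans hscale ?_
  by_cases hA0 : A = 0
  · rw [← hA, hA0, mul_zero]; exact zero_le_one
  · have hAtop : A ≠ ⊤ := hfin.ne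
    have hAt : (0:ℝ) < A.toReal := ENNReal.toReal_pos hA0 hAtop
    have hcrm : A.toReal ≤ c ^ rm := by
      calc A.toReal = (A.toReal ^ rm⁻¹) ^ rm := by
            rw [Real.rpow_inv_rpow hAt.le hrm.ne']
        _ ≤ c ^ rm := Real.rpow_le_rpow (by positivity) (le_max_right _ _) hrm.le
    have hinv : c ^ (-rm) ≤ (A.toReal)⁻¹ := by
      rw [Real.rpow_neg hc0.le]
      exact inv_anti₀ hAt hcrm
    calc ENNReal.ofReal (c ^ (-rm)) * A ≤ ENNReal.ofReal (A.toReal)⁻¹ * A :=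
          mul_le_mul_left (ENNReal.ofReal_le_ofReal hinv) _
      _ = (ENNReal.ofReal A.toReal)⁻¹ * A := by rw [ENNReal.ofReal_inv_of_pos hAt]
      _ = A⁻¹ * A := by rw [ENNReal.ofReal_toReal hAtop]
      _ = 1 := ENNReal.inv_mul_cancel hA0 hAtop

lemma genMod_sub {r k f g : Y → ℝ} (hf : Measurable f) (hr : Measurable r) (hk : Measurable k)
    (hr0 : ∀ y, 0 ≤ r y) (hk0 : ∀ y, 0 ≤ k y) {l1 l2 : ℝ} (hl1 : 0 < l1) (hl2 : 0 < l2) :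
    genMod ν r k (fun y => f y - g y) (2 * max l1 l2) ≤ genMod ν r k f l1 + genMod ν r k g l2 := by
  set L : ℝ := max l1 l2 with hLdef
  have hL : 0 < L := lt_max_of_lt_left hl1
  have key : ∀ y, ENNReal.ofReal ((|f y - g y| / (2 * L)) ^ r y * k y) ≤
      ENNReal.ofReal ((|f y| / L) ^ r y * k y) + ENNReal.ofReal ((|g y| / L) ^ r y * k y) := by
    intro y
    set a : ℝ := |f y| / L
    set b : ℝ := |g y| / L
    have ha : 0 ≤ a := div_nonneg (abs_nonneg _) hL.le
    have hb : 0 ≤ b := div_nonneg (abs_nonneg _) hL.le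
    have h1 : |f y - g y| / (2 * L) ≤ max a b := by
      have habs : |f y - g y| ≤ |f y| + |g y| := abs_sub _ _
      have : |f y - g y| / (2 * L) ≤ (a + b) / 2 := by
        rw [div_le_div_iff₀ (by positivity) two_pos]
        have haL : a * L = |f y| := div_mul_cancel₀ _ hL.ne'
        have hbL : b * L = |g y| := div_mul_cancel₀ _ hL.ne'
        calc |f y - g y| * 2 ≤ (|f y| + |g y|) * 2 := by linarith
          _ = (a + b) * (2 * L) := by
              rw [show (a + b) * (2 * L) = 2 * (a * L) + 2 * (b * L) by ring, haL, hbL]; ring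
      refine le_trans this ?_
      rcases le_total a b with h | h
      · calc (a + b)/2 ≤ (b + b)/2 := by linarith
          _ = b := by ring
          _ ≤ max a b := le_max_right _ _
      · calc (a + b)/2 ≤ (a + a)/2 := by linarith
          _ = a := by ring
          _ ≤ max a b := le_max_left _ _
    have h2 : (|f y - g y| / (2 * L)) ^ r y ≤ (max a b) ^ r y :=
      Real.rpow_le_rpow (div_nonneg (abs_nonneg _) (by positivity)) h1 (hr0 y)
    have h3 : (max a b) ^ r y ≤ a ^ r y + b ^ r y := by
      rcases le_total a b with h | h
      · rw [max_eq_right h]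
        have : (0:ℝ) ≤ a ^ r y := Real.rpow_nonneg ha _
        linarith
      · rw [max_eq_left h]
        have : (0:ℝ) ≤ b ^ r y := Real.rpow_nonneg hb _
        linarith
    calc ENNReal.ofReal ((|f y - g y| / (2 * L)) ^ r y * k y)
        ≤ ENNReal.ofReal ((a ^ r y + b ^ r y) * k y) := by
          refine ENNReal.ofReal_le_ofReal (mul_le_mul_of_nonneg_right (le_trans h2 h3) (hk0 y))
      _ = ENNReal.ofReal (a ^ r y * k y + b ^ r y * k y) := by rw [add_mul]
      _ = ENNReal.ofReal (a ^ r y * k y) + ENNReal.ofReal (b ^ r y * k y) := by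
          rw [ENNReal.ofReal_add (mul_nonneg (Real.rpow_nonneg ha _) (hk0 y))
            (mul_nonneg (Real.rpow_nonneg hb _) (hk0 y))]
  calc genMod ν r k (fun y => f y - g y) (2 * L)
      ≤ ∫⁻ y, (ENNReal.ofReal ((|f y| / L) ^ r y * k y)
          + ENNReal.ofReal ((|g y| / L) ^ r y * k y)) ∂ν := lintegral_mono key
    _ = genMod ν r k f L + genMod ν r k g L :=
        lintegral_add_left (measurable_genMod_integrand hf hr hk hL.le) _
    _ ≤ genMod ν r k f l1 + genMod ν r k g l2 := by
        refine add_le_add ?_ ?_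
        · exact genMod_mono hr0 le_rfl hk0 hl1 (le_max_left _ _)
        · exact genMod_mono hr0 le_rfl hk0 hl2 (le_max_right _ _)


lemma genMod_chebyshev {r f : Y → ℝ} {rm : ℝ} (hf : Measurable f) (hr : Measurable r)
    (hr0 : ∀ y, rm ≤ r y) (hrm : 0 ≤ rm) {l δ : ℝ} (hl : 0 < l) (hδ : l ≤ δ)
    (h1 : genMod ν r (fun _ => 1) f l ≤ 1) :
    ν {y | δ ≤ |f y|} ≤ ENNReal.ofReal ((l / δ) ^ rm) := by
  have hδ0 : 0 < δ := lt_of_lt_of_le hl hδ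
  have hE : MeasurableSet {y | δ ≤ |f y|} := measurableSet_le measurable_const hf.abs
  set B : ENNReal := ENNReal.ofReal ((δ / l) ^ rm) with hB
  have key : ν {y | δ ≤ |f y|} * B ≤ 1 := by
    calc ν {y | δ ≤ |f y|} * B = ∫⁻ _ in {y | δ ≤ |f y|}, B ∂ν := by
          rw [setLIntegral_const, mul_comm]
      _ ≤ ∫⁻ y in {y | δ ≤ |f y|}, ENNReal.ofReal ((|f y| / l) ^ r y * 1) ∂ν := by
          refine setLIntegral_mono ?_ ?_
          · exact measurable_genMod_integrand hf hr measurable_const hl.le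
          · intro y hy
            refine ENNReal.ofReal_le_ofReal ?_
            rw [mul_one]
            have hb1 : (1:ℝ) ≤ δ / l := (one_le_div hl).2 hδ
            have hby : δ / l ≤ |f y| / l := by gcongr; exact hy
            calc (δ / l) ^ rm ≤ (δ / l) ^ r y :=
                  Real.rpow_le_rpow_of_exponent_le hb1 (hr0 y)
              _ ≤ (|f y| / l) ^ r y :=
                  Real.rpow_le_rpow (by positivity) hby (le_trans hrm (hr0 y))
      _ ≤ ∫⁻ y, ENNReal.ofReal ((|f y| / l) ^ r y * 1) ∂ν := setLIntegral_le_lintegral _ _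
      _ ≤ 1 := h1
  have hBpos : (0:ℝ) < (δ / l) ^ rm := Real.rpow_pos_of_pos (by positivity) _
  have : ν {y | δ ≤ |f y|} ≤ B⁻¹ := ENNReal.le_inv_iff_mul_le.2 key
  refine le_trans this (le_of_eq ?_)
  rw [hB, ← ENNReal.ofReal_inv_of_pos hBpos, ← Real.inv_rpow (by positivity), inv_div]

lemma genMod_fatou {r k f : Y → ℝ} {F : ℕ → Y → ℝ} {l : ℝ}
    (hl : 0 < l) (hr : Measurable r) (hk : Measurable k) (hr0 : ∀ y, 0 ≤ r y)
    (hF : ∀ j, Measurable (F j))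
    (hconv : ∀ᵐ y ∂ν, Tendsto (fun j => F j y) atTop (nhds (f y)))
    (hbd : ∀ᶠ j in atTop, genMod ν r k (F j) l ≤ 1) :
    genMod ν r k f l ≤ 1 := by
  have hmeas : ∀ j, Measurable fun y => ENNReal.ofReal ((|F j y| / l) ^ r y * k y) :=
    fun j => measurable_genMod_integrand (hF j) hr hk hl.le
  have hptwise : ∀ᵐ y ∂ν, ENNReal.ofReal ((|f y| / l) ^ r y * k y) =
      liminf (fun j => ENNReal.ofReal ((|F j y| / l) ^ r y * k y)) atTop := by
    filter_upwards [hconv] with y hy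
    have h1 : Tendsto (fun j => |F j y| / l) atTop (nhds (|f y| / l)) :=
      (hy.abs).div_const l
    have h2 : Tendsto (fun j => (|F j y| / l) ^ r y) atTop (nhds ((|f y| / l) ^ r y)) :=
      h1.rpow_const (Or.inr (hr0 y))
    have h3 : Tendsto (fun j => ENNReal.ofReal ((|F j y| / l) ^ r y * k y)) atTop
        (nhds (ENNReal.ofReal ((|f y| / l) ^ r y * k y))) :=
      (ENNReal.continuous_ofReal.tendsto _).comp (h2.mul_const (k y))
    exact (h3.liminf_eq).symm
  calc genMod ν r k f l
      = ∫⁻ y, liminf (fun j => ENNReal.ofReal ((|F j y| / l) ^ r y * k y)) atTop ∂ν :=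
        lintegral_congr_ae hptwise
    _ ≤ liminf (fun j => genMod ν r k (F j) l) atTop := lintegral_liminf_le hmeas
    _ ≤ 1 := by
        obtain ⟨N, hN⟩ := eventually_atTop.1 hbd
        refine liminf_le_of_le (by isBoundedDefault) ?_
        intro b hb
        obtain ⟨j, hj1, hj2⟩ := (hb.and (eventually_ge_atTop N)).exists
        exact le_trans hj1 (hN j hj2)

lemma prod_null_of_lintegral_zero {α β : Type*} [MeasurableSpace α] [MeasurableSpace β]
    (μ : Measure α) (ν : Measure β) {s : Set (α × β)} (hs : MeasurableSet s)
    (h : ∫⁻ x, ν (Prod.mk x ⁻¹' s) ∂μ = 0) : μ.prod ν s = 0 := by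
  rw [Measure.prod_def]
  by_cases hm : AEMeasurable (fun x => ν.map (Prod.mk x)) μ
  · rw [Measure.bind, Measure.join_apply hs,
      lintegral_map' (Measure.measurable_coe hs).aemeasurable hm]
    rw [← h]
    refine lintegral_congr_ae ?_
    filter_upwards with x
    rw [Measure.map_apply measurable_prodMk_left hs]
  · rw [Measure.bind, Measure.map_of_not_aemeasurable hm, Measure.join_zero]
    rfl

lemma prod_null_left' {α β : Type*} [MeasurableSpace α] [MeasurableSpace β]
    (μ : Measure α) (ν : Measure β) {T : Set α} (hT : MeasurableSet T) (h : μ T = 0) :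
    μ.prod ν {z : α × β | z.1 ∈ T} = 0 := by
  have hs : MeasurableSet {z : α × β | z.1 ∈ T} := measurable_fst hT
  refine prod_null_of_lintegral_zero μ ν hs ?_
  have : ∀ x, ν (Prod.mk x ⁻¹' {z : α × β | z.1 ∈ T}) = T.indicator (fun _ => ν univ) x := by
    intro x
    by_cases hx : x ∈ T
    · simp only [indicator_of_mem hx]
      congr 1
      ext y
      simp [hx]
    · simp only [indicator_of_notMem hx]
      have : Prod.mk x ⁻¹' {z : α × β | z.1 ∈ T} = (∅ : Set β) := by
        ext y; simp [hx]
      rw [this]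
      exact measure_empty
  simp_rw [this]
  rw [lintegral_indicator hT, setLIntegral_const]
  simp [h]

lemma prod_null_right' {α β : Type*} [MeasurableSpace α] [MeasurableSpace β]
    (μ : Measure α) (ν : Measure β) {T : Set β} (hT : MeasurableSet T) (h : ν T = 0) :
    μ.prod ν {z : α × β | z.2 ∈ T} = 0 := by
  have hs : MeasurableSet {z : α × β | z.2 ∈ T} := measurable_snd hT
  refine prod_null_of_lintegral_zero μ ν hs ?_
  have hpre : ∀ x : α, Prod.mk x ⁻¹' {z : α × β | z.2 ∈ T} = T := fun x => rfl
  simp_rw [hpre, h]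
  simp

/-- lift an a.e. property to the product -/
lemma ae_prod_of_ae {α : Type*} [MeasurableSpace α] (μ : Measure α) {P : α → Prop}
    (h : ∀ᵐ x ∂μ, P x) : ∀ᵐ z ∂(μ.prod μ), P z.1 ∧ P z.2 := by
  obtain ⟨T, hsub, hTm, hT0⟩ := exists_measurable_superset_of_null (ae_iff.1 h)
  rw [ae_iff]
  have hsub2 : {z : α × α | ¬(P z.1 ∧ P z.2)} ⊆ {z : α × α | z.1 ∈ T} ∪ {z : α × α | z.2 ∈ T} := by
    intro z hz
    simp only [Set.mem_setOf_eq, not_and_or] at hz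
    rcases hz with h1 | h2
    · exact Or.inl (hsub h1)
    · exact Or.inr (hsub h2)
  refine measure_mono_null hsub2 ?_
  refine measure_union_null ?_ ?_
  · exact prod_null_left' μ μ hTm hT0
  · exact prod_null_right' μ μ hTm hT0


lemma genSet_sInf_nonneg (S : Set ℝ) (h : ∀ x ∈ S, 0 < x) : 0 ≤ sInf S :=
  Real.sInf_nonneg fun x hx => (h x hx).le

lemma genMod_le_one_of_sInf_lt {r k f : Y → ℝ} {rm : ℝ} (hr0 : ∀ y, rm ≤ r y) (hrm : 0 ≤ rm)
    (hk0 : ∀ y, 0 ≤ k y) {lam : ℝ}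
    (hne : {l : ℝ | 0 < l ∧ genMod ν r k f l ≤ 1}.Nonempty)
    (h : sInf {l : ℝ | 0 < l ∧ genMod ν r k f l ≤ 1} < lam) :
    genMod ν r k f lam ≤ 1 := by
  have hbdd : BddBelow {l : ℝ | 0 < l ∧ genMod ν r k f l ≤ 1} := ⟨0, fun x hx => hx.1.le⟩
  obtain ⟨l, ⟨hl0, hl1⟩, hlt⟩ := (csInf_lt_iff hbdd hne).1 h
  exact le_trans (genMod_mono hr0 hrm hk0 hl0 hlt.le) hl1

lemma sInf_le_of_genMod_le {r k f : Y → ℝ} {lam : ℝ} (hlam : 0 < lam)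
    (h : genMod ν r k f lam ≤ 1) :
    sInf {l : ℝ | 0 < l ∧ genMod ν r k f l ≤ 1} ≤ lam :=
  csInf_le ⟨0, fun x hx => hx.1.le⟩ ⟨hlam, h⟩

end helpers





/-- The modular `ρ(w) = ∫ |w(x)|^{p(x)} dμ` of a variable exponent Lebesgue space. -/
noncomputable def vModular {X : Type*} [MeasurableSpace X] (μ : Measure X)
    (p w : X → ℝ) : ENNReal :=
  ∫⁻ x, ENNReal.ofReal (|w x| ^ p x) ∂μ

/-- The Luxemburg norm `‖w‖ = inf {λ > 0 : ρ(w/λ) ≤ 1}`. -/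
noncomputable def luxNorm {X : Type*} [MeasurableSpace X] (μ : Measure X)
    (p w : X → ℝ) : ℝ :=
  sInf {l : ℝ | 0 < l ∧ vModular μ p (fun x => w x / l) ≤ 1}

/-- Membership in the variable exponent Lebesgue space `L^{p(x)}(X, μ)`. -/
def MemLp' {X : Type*} [MeasurableSpace X] (μ : Measure X) (p w : X → ℝ) : Prop :=
  Measurable w ∧ ∃ l : ℝ, 0 < l ∧ vModular μ p (fun x => w x / l) < ⊤

/-- The Gagliardo modular with kernel `K`:
`∫∫ (|w(x)-w(y)|/λ)^{p(x,y)} K(x,y) dμ dμ`. -/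
noncomputable def gModular {X : Type*} [MeasurableSpace X] (μ : Measure X)
    (p K : X → X → ℝ) (w : X → ℝ) (l : ℝ) : ENNReal :=
  ∫⁻ q : X × X, ENNReal.ofReal ((|w q.1 - w q.2| / l) ^ p q.1 q.2 * K q.1 q.2)
    ∂(μ.prod μ)

/-- The Gagliardo–Luxemburg seminorm `[w]_K`. -/
noncomputable def gagNorm {X : Type*} [MeasurableSpace X] (μ : Measure X)
    (p K : X → X → ℝ) (w : X → ℝ) : ℝ :=
  sInf {l : ℝ | 0 < l ∧ gModular μ p K w l ≤ 1}

/-- Membership in the kernel fractional Sobolev space `W_K^{q(x), p(x,y)}(X)`. -/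
def MemW {X : Type*} [MeasurableSpace X] (μ : Measure X)
    (q : X → ℝ) (p K : X → X → ℝ) (w : X → ℝ) : Prop :=
  MemLp' μ q w ∧ ∃ l : ℝ, 0 < l ∧ gModular μ p K w l < ⊤

/-- The norm `‖w‖ = [w]_K + ‖w‖_{q(x)}` of the kernel fractional Sobolev space. -/
noncomputable def sobNorm {X : Type*} [MeasurableSpace X] (μ : Measure X)
    (q : X → ℝ) (p K : X → X → ℝ) (w : X → ℝ) : ℝ :=
  gagNorm μ p K w + luxNorm μ q w



section bridge

variable {X : Type*} [MeasurableSpace X] {μ : Measure X}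

lemma vModular_div_eq (q w : X → ℝ) {l : ℝ} (hl : 0 < l) :
    vModular μ q (fun x => w x / l) = genMod μ q (fun _ => 1) w l := by
  unfold vModular genMod
  refine lintegral_congr fun x => ?_
  rw [mul_one, abs_div, abs_of_pos hl]

lemma gModular_eq (p K : X → X → ℝ) (w : X → ℝ) (l : ℝ) :
    gModular μ p K w l =
      genMod (μ.prod μ) (fun z => p z.1 z.2) (fun z => K z.1 z.2)
        (fun z => w z.1 - w z.2) l := rfl

lemma luxNorm_eq_sInf (q w : X → ℝ) :
    luxNorm μ q w = sInf {l : ℝ | 0 < l ∧ genMod μ q (fun _ => 1) w l ≤ 1} := by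
  unfold luxNorm
  congr 1
  ext l
  constructor
  · rintro ⟨h1, h2⟩
    exact ⟨h1, by rw [← vModular_div_eq q w h1]; exact h2⟩
  · rintro ⟨h1, h2⟩
    exact ⟨h1, by rw [vModular_div_eq q w h1]; exact h2⟩

lemma gagNorm_eq_sInf (p K : X → X → ℝ) (w : X → ℝ) :
    gagNorm μ p K w = sInf {l : ℝ | 0 < l ∧
      genMod (μ.prod μ) (fun z => p z.1 z.2) (fun z => K z.1 z.2)
        (fun z => w z.1 - w z.2) l ≤ 1} := rfl

end bridge

/-- Completeness of the kernel fractional Sobolev space `W_K^{q(x), p(x,y)}(X)`: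
every Cauchy sequence converges in the norm `‖w‖ = [w]_K + ‖w‖_{q(x)}`. -/
theorem sobolev_kernel_complete {X : Type*} [MeasurableSpace X] (μ : Measure X)
    (q : X → ℝ) (p K : X → X → ℝ)
    (qm qM pm pM : ℝ)
    (hq : Measurable q) (hqm : 1 < qm) (hqbd : ∀ x, qm ≤ q x ∧ q x ≤ qM)
    (hp : Measurable fun z : X × X => p z.1 z.2)
    (hpm : 1 < pm) (hpbd : ∀ x y, pm ≤ p x y ∧ p x y ≤ pM)
    (hpsymm : ∀ x y, p x y = p y x)
    (hK : Measurable fun z : X × X => K z.1 z.2)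
    (hKpos : ∀ x y, 0 < K x y) (hKsymm : ∀ x y, K x y = K y x)
    (u : ℕ → X → ℝ) (hu : ∀ n, MemW μ q p K (u n))
    (hcauchy : ∀ ε : ℝ, 0 < ε → ∃ N : ℕ, ∀ m n, N ≤ m → N ≤ n →
      sobNorm μ q p K (fun x => u m x - u n x) < ε) :
    ∃ w : X → ℝ, MemW μ q p K w ∧
      Tendsto (fun n => sobNorm μ q p K (fun x => u n x - w x)) atTop (nhds 0) := by
  classical
  -- basic facts
  have hq0 : ∀ x, qm ≤ q x := fun x => (hqbd x).1
  have hp0 : ∀ z : X × X, pm ≤ p z.1 z.2 := fun z => (hpbd z.1 z.2).1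
  have hK0 : ∀ z : X × X, 0 ≤ K z.1 z.2 := fun z => (hKpos z.1 z.2).le
  have hqm0 : (0:ℝ) ≤ qm := by linarith
  have hpm0 : (0:ℝ) ≤ pm := by linarith
  have hq0' : ∀ x : X, (0:ℝ) ≤ q x := fun x => le_trans hqm0 (hq0 x)
  have hp0' : ∀ z : X × X, (0:ℝ) ≤ p z.1 z.2 := fun z => le_trans hpm0 (hp0 z)
  have hone : ∀ x : X, (0:ℝ) ≤ (fun _ : X => (1:ℝ)) x := fun _ => zero_le_one
  have humeas : ∀ n, Measurable (u n) := fun n => (hu n).1.1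
  -- norms are nonneg, and sobNorm dominates both
  have hlux_nonneg : ∀ f : X → ℝ, 0 ≤ luxNorm μ q f := by
    intro f
    rw [luxNorm_eq_sInf]
    exact genSet_sInf_nonneg _ fun x hx => hx.1
  have hgag_nonneg : ∀ f : X → ℝ, 0 ≤ gagNorm μ p K f := by
    intro f
    rw [gagNorm_eq_sInf]
    exact genSet_sInf_nonneg _ fun x hx => hx.1
  -- translation of membership to genMod bounds
  have hval : ∀ n, ∃ l, 0 < l ∧ genMod μ q (fun _ => 1) (u n) l ≤ 1 := by
    intro n
    obtain ⟨l, hl, hfin⟩ := (hu n).1.2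
    rw [vModular_div_eq q (u n) hl] at hfin
    exact genMod_exists_le_one hq0 (by linarith) hone hl hfin
  have hgagmem : ∀ n, ∃ l, 0 < l ∧
      genMod (μ.prod μ) (fun z => p z.1 z.2) (fun z => K z.1 z.2)
        (fun z => u n z.1 - u n z.2) l ≤ 1 := by
    intro n
    obtain ⟨l, hl, hfin⟩ := (hu n).2
    rw [gModular_eq p K (u n) l] at hfin
    exact genMod_exists_le_one hp0 (by linarith) hK0 hl hfin
  -- differences belong to both modular spaces
  have hdiffv : ∀ m n', ∃ l, 0 < l ∧
      genMod μ q (fun _ => 1) (fun x => u m x - u n' x) l ≤ 1 := by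
    intro m n'
    obtain ⟨l1, hl1, h1⟩ := hval m
    obtain ⟨l2, hl2, h2⟩ := hval n'
    have hsub := genMod_sub (ν := μ) (humeas m) hq measurable_const hq0' hone hl1 hl2
      (k := fun _ => (1:ℝ)) (g := u n')
    have hfin : genMod μ q (fun _ => 1) (fun x => u m x - u n' x) (2 * max l1 l2) < ⊤ :=
      lt_of_le_of_lt hsub (lt_of_le_of_lt (add_le_add h1 h2) (by norm_num))
    exact genMod_exists_le_one hq0 (by linarith) hone (by positivity) hfin
  have hdiffg : ∀ m n', ∃ l, 0 < l ∧
      genMod (μ.prod μ) (fun z => p z.1 z.2) (fun z => K z.1 z.2)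
        (fun z => (u m z.1 - u n' z.1) - (u m z.2 - u n' z.2)) l ≤ 1 := by
    intro m n'
    obtain ⟨l1, hl1, h1⟩ := hgagmem m
    obtain ⟨l2, hl2, h2⟩ := hgagmem n'
    have hmeas1 : Measurable fun z : X × X => u m z.1 - u m z.2 :=
      ((humeas m).comp measurable_fst).sub ((humeas m).comp measurable_snd)
    have hsub := genMod_sub (ν := μ.prod μ) hmeas1 hp hK hp0' hK0 hl1 hl2
      (g := fun z => u n' z.1 - u n' z.2)
    have heq : (fun z : X × X => (u m z.1 - u m z.2) - (u n' z.1 - u n' z.2)) =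
        (fun z : X × X => (u m z.1 - u n' z.1) - (u m z.2 - u n' z.2)) := by
      funext z; ring
    rw [heq] at hsub
    have hfin : genMod (μ.prod μ) (fun z => p z.1 z.2) (fun z => K z.1 z.2)
        (fun z => (u m z.1 - u n' z.1) - (u m z.2 - u n' z.2)) (2 * max l1 l2) < ⊤ :=
      lt_of_le_of_lt hsub (lt_of_le_of_lt (add_le_add h1 h2) (by norm_num))
    exact genMod_exists_le_one hp0 (by linarith) hK0 (by positivity) hfin
  -- norm smallness gives modular bounds
  have hlux_to_mod : ∀ m n' (lam : ℝ), luxNorm μ q (fun x => u m x - u n' x) < lam →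
      genMod μ q (fun _ => 1) (fun x => u m x - u n' x) lam ≤ 1 := by
    intro m n' lam h
    rw [luxNorm_eq_sInf] at h
    exact genMod_le_one_of_sInf_lt hq0 hqm0 hone (hdiffv m n') h
  have hgag_to_mod : ∀ m n' (lam : ℝ), gagNorm μ p K (fun x => u m x - u n' x) < lam →
      genMod (μ.prod μ) (fun z => p z.1 z.2) (fun z => K z.1 z.2)
        (fun z => (u m z.1 - u n' z.1) - (u m z.2 - u n' z.2)) lam ≤ 1 := by
    intro m n' lam h
    rw [gagNorm_eq_sInf] at h
    exact genMod_le_one_of_sInf_lt hp0 hpm0 hK0 (hdiffg m n') h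
  -- choose a rapidly Cauchy subsequence
  have hchoice : ∀ k : ℕ, ∃ N : ℕ, ∀ m n', N ≤ m → N ≤ n' →
      sobNorm μ q p K (fun x => u m x - u n' x) < (4:ℝ)⁻¹ ^ k :=
    fun k => hcauchy _ (by positivity)
  choose N hNs using hchoice
  let nk : ℕ → ℕ := fun k => Nat.rec (N 0) (fun k ih => max (ih + 1) (N (k + 1))) k
  have hnk_succ : ∀ k, nk k < nk (k + 1) :=
    fun k => lt_of_lt_of_le (Nat.lt_succ_self _) (le_max_left _ _)
  have hnk_mono : StrictMono nk := strictMono_nat_of_lt_succ hnk_succ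
  have hnkN : ∀ k, N k ≤ nk k := by
    intro k
    cases k with
    | zero => exact le_refl _
    | succ k => exact le_max_right _ _
  have hstep : ∀ k, sobNorm μ q p K (fun x => u (nk (k + 1)) x - u (nk k) x) < (4:ℝ)⁻¹ ^ k := by
    intro k
    exact hNs k _ _ (le_trans (hnkN k) (hnk_succ k).le) (hnkN k)
  -- the sobNorm dominates luxNorm
  have hlux_le_sob : ∀ f : X → ℝ, luxNorm μ q f ≤ sobNorm μ q p K f := by
    intro f
    have := hgag_nonneg f
    unfold sobNorm
    linarith
  have hgag_le_sob : ∀ f : X → ℝ, gagNorm μ p K f ≤ sobNorm μ q p K f := by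
    intro f
    have := hlux_nonneg f
    unfold sobNorm
    linarith
  -- modular bounds for the steps
  have hmodk : ∀ k, genMod μ q (fun _ => 1)
      (fun x => u (nk (k + 1)) x - u (nk k) x) ((4:ℝ)⁻¹ ^ k) ≤ 1 := by
    intro k
    refine hlux_to_mod _ _ _ (lt_of_le_of_lt (hlux_le_sob _) (hstep k))
  -- Chebyshev estimate
  have hcheb : ∀ k, μ {x | (2:ℝ)⁻¹ ^ k ≤ |u (nk (k + 1)) x - u (nk k) x|} ≤
      ENNReal.ofReal ((2:ℝ)⁻¹ ^ k) := by
    intro k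
    have hmeask : Measurable fun x => u (nk (k + 1)) x - u (nk k) x :=
      (humeas _).sub (humeas _)
    have hl : (0:ℝ) < (4:ℝ)⁻¹ ^ k := by positivity
    have hld : (4:ℝ)⁻¹ ^ k ≤ (2:ℝ)⁻¹ ^ k := by
      refine pow_le_pow_left₀ (by norm_num) (by norm_num) k
    have h := genMod_chebyshev (ν := μ) hmeask hq hq0 hqm0 hl hld (hmodk k)
    refine le_trans h (ENNReal.ofReal_le_ofReal ?_)
    have hq1 : ((4:ℝ)⁻¹ ^ k / (2:ℝ)⁻¹ ^ k) = (2:ℝ)⁻¹ ^ k := by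
      rw [← div_pow]
      norm_num
    rw [hq1]
    have hbase0 : (0:ℝ) < (2:ℝ)⁻¹ ^ k := by positivity
    have hbase1 : ((2:ℝ)⁻¹ : ℝ) ^ k ≤ 1 := by
      refine pow_le_one₀ (by norm_num) (by norm_num)
    calc ((2:ℝ)⁻¹ ^ k) ^ qm ≤ ((2:ℝ)⁻¹ ^ k) ^ (1:ℝ) :=
          Real.rpow_le_rpow_of_exponent_ge hbase0 hbase1 hqm.le
      _ = (2:ℝ)⁻¹ ^ k := Real.rpow_one _
  -- Borel–Cantelli
  have htsum : (∑' k, μ {x | (2:ℝ)⁻¹ ^ k ≤ |u (nk (k + 1)) x - u (nk k) x|}) ≠ ⊤ := by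
    have hb : ∀ k, μ {x | (2:ℝ)⁻¹ ^ k ≤ |u (nk (k + 1)) x - u (nk k) x|} ≤
        (ENNReal.ofReal (2:ℝ)⁻¹) ^ k := by
      intro k
      refine le_trans (hcheb k) (le_of_eq ?_)
      rw [ENNReal.ofReal_pow (by norm_num)]
    refine ne_top_of_le_ne_top ?_ (ENNReal.tsum_le_tsum hb)
    rw [ENNReal.tsum_geometric]
    refine (ENNReal.inv_lt_top.2 ?_).ne
    rw [tsub_pos_iff_lt]
    exact ENNReal.ofReal_lt_one.2 (by norm_num)
  have hBC := measure_limsup_atTop_eq_zero htsum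
  have h_ae1 : ∀ᵐ x ∂μ, ∀ᶠ k in atTop,
      |u (nk (k + 1)) x - u (nk k) x| < (2:ℝ)⁻¹ ^ k := by
    rw [ae_iff]
    refine measure_mono_null ?_ hBC
    intro x hx
    simp only [Set.mem_setOf_eq, not_eventually, not_lt] at hx
    rw [mem_limsup_iff_frequently_mem]
    exact hx.mono fun k hk => hk
  -- a.e. pointwise convergence of the subsequence
  have h_ae2 : ∀ᵐ x ∂μ, ∃ l : ℝ, Tendsto (fun k => u (nk k) x) atTop (nhds l) := by
    filter_upwards [h_ae1] with x hx
    obtain ⟨Kx, hKx⟩ := eventually_atTop.1 hx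
    have hsum : Summable fun j : ℕ => ((2:ℝ)⁻¹ ^ (j + Kx)) := by
      have := (summable_geometric_of_lt_one (r := (2:ℝ)⁻¹) (by norm_num)
        (by norm_num)).mul_right ((2:ℝ)⁻¹ ^ Kx)
      refine this.congr fun j => ?_
      rw [pow_add]
    have hcau : CauchySeq fun j : ℕ => u (nk (j + Kx)) x := by
      refine cauchySeq_of_dist_le_of_summable _ ?_ hsum
      intro j
      rw [Real.dist_eq]
      have := hKx (j + Kx) (Nat.le_add_left _ _)
      have hidx : j.succ + Kx = j + Kx + 1 := by omega
      rw [hidx]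
      calc |u (nk (j + Kx)) x - u (nk (j + Kx + 1)) x|
          = |u (nk (j + Kx + 1)) x - u (nk (j + Kx)) x| := abs_sub_comm _ _
        _ ≤ (2:ℝ)⁻¹ ^ (j + Kx) := this.le
    obtain ⟨l, hl⟩ := cauchySeq_tendsto_of_complete hcau
    exact ⟨l, (tendsto_add_atTop_iff_nat Kx).1 hl⟩
  obtain ⟨w, hwmeas, hwtend⟩ := measurable_limit_of_tendsto_metrizable_ae
    (fun k => (humeas (nk k)).aemeasurable) h_ae2
  -- key estimate via Fatou
  have hkey : ∀ ε : ℝ, 0 < ε → ∃ M : ℕ, ∀ m, M ≤ m →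
      genMod μ q (fun _ => 1) (fun x => u m x - w x) ε ≤ 1 ∧
      genMod (μ.prod μ) (fun z => p z.1 z.2) (fun z => K z.1 z.2)
        (fun z => (u m z.1 - w z.1) - (u m z.2 - w z.2)) ε ≤ 1 := by
    intro ε hε
    obtain ⟨M, hM⟩ := hcauchy ε hε
    refine ⟨M, fun m hm => ?_⟩
    have hsmall : ∀ᶠ k in atTop, sobNorm μ q p K (fun x => u m x - u (nk k) x) < ε := by
      refine eventually_atTop.2 ⟨M, fun k hk => ?_⟩
      exact hM m (nk k) hm (le_trans hk (hnk_mono.le_apply))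
    constructor
    · refine genMod_fatou hε hq measurable_const hq0'
        (fun k => (humeas m).sub (humeas (nk k))) ?_ ?_
      · filter_upwards [hwtend] with x hx
        exact tendsto_const_nhds.sub hx
      · filter_upwards [hsmall] with k hk
        exact hlux_to_mod m (nk k) ε (lt_of_le_of_lt (hlux_le_sob _) hk)
    · refine genMod_fatou hε hp hK hp0'
        (fun k => (((humeas m).comp measurable_fst).sub ((humeas (nk k)).comp measurable_fst)).sub
          (((humeas m).comp measurable_snd).sub ((humeas (nk k)).comp measurable_snd))) ?_ ?_
      · have hprod := ae_prod_of_ae μ hwtend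
        filter_upwards [hprod] with z hz
        exact (tendsto_const_nhds.sub hz.1).sub (tendsto_const_nhds.sub hz.2)
      · filter_upwards [hsmall] with k hk
        exact hgag_to_mod m (nk k) ε (lt_of_le_of_lt (hgag_le_sob _) hk)
  -- MemW w
  obtain ⟨M1, hM1⟩ := hkey 1 one_pos
  have hw1 := hM1 M1 le_rfl
  have hmemw : MemW μ q p K w := by
    refine ⟨⟨hwmeas, ?_⟩, ?_⟩
    · -- variable exponent part
      obtain ⟨l1, hl1, h1⟩ := hval M1
      have hsub := genMod_sub (ν := μ) (humeas M1) hq measurable_const hq0' hone hl1 one_pos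
        (g := fun x => u M1 x - w x)
      have heq : (fun x => u M1 x - (u M1 x - w x)) = w := by
        funext x; ring
      rw [heq] at hsub
      refine ⟨2 * max l1 1, by positivity, ?_⟩
      rw [vModular_div_eq q w (by positivity)]
      exact lt_of_le_of_lt (le_trans hsub (add_le_add h1 hw1.1)) (by norm_num)
    · -- Gagliardo part
      obtain ⟨l1, hl1, h1⟩ := hgagmem M1
      have hmeas1 : Measurable fun z : X × X => u M1 z.1 - u M1 z.2 :=
        ((humeas M1).comp measurable_fst).sub ((humeas M1).comp measurable_snd)
      have hsub := genMod_sub (ν := μ.prod μ) hmeas1 hp hK hp0' hK0 hl1 one_pos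
        (g := fun z => (u M1 z.1 - w z.1) - (u M1 z.2 - w z.2))
      have heq : (fun z : X × X => (u M1 z.1 - u M1 z.2) -
          ((u M1 z.1 - w z.1) - (u M1 z.2 - w z.2))) = (fun z : X × X => w z.1 - w z.2) := by
        funext z; ring
      rw [heq] at hsub
      refine ⟨2 * max l1 1, by positivity, ?_⟩
      rw [gModular_eq p K w _]
      exact lt_of_le_of_lt (le_trans hsub (add_le_add h1 hw1.2)) (by norm_num)
  refine ⟨w, hmemw, ?_⟩
  -- final convergence
  rw [Metric.tendsto_atTop]
  intro ε hε
  obtain ⟨M, hM⟩ := hkey (ε / 3) (by linarith)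
  refine ⟨M, fun m hm => ?_⟩
  obtain ⟨hv, hg⟩ := hM m hm
  have hluxle : luxNorm μ q (fun x => u m x - w x) ≤ ε / 3 := by
    rw [luxNorm_eq_sInf]
    exact sInf_le_of_genMod_le (by linarith) hv
  have hgagle : gagNorm μ p K (fun x => u m x - w x) ≤ ε / 3 := by
    rw [gagNorm_eq_sInf]
    exact sInf_le_of_genMod_le (by linarith) hg
  have hnn1 := hlux_nonneg (fun x => u m x - w x)
  have hnn2 := hgag_nonneg (fun x => u m x - w x)
  rw [Real.dist_eq, sub_zero, abs_of_nonneg (by unfold sobNorm; linarith)]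
  unfold sobNorm
  linarith
end

section
/- Let E be a reflexive Banach space and T : E → E* a bounded, continuous, strictly monotone, coercive operator of type (S₊). Then T is a bijection and its inverse T⁻¹ : E* → E is continuous; moreover T⁻¹ maps bounded sets to bounded sets. -/
open Filter Topology Bornology

/-!
Surjectivity without a fixed-point theorem. For a finite set `S` in a large ball, the
inequalities `0 ≤ (T v - f) (v - u)`, `v ∈ S`, form a matrix game whose matrix has nonnegative
symmetric part by monotonicity, so von Neumann's minimax theorem solves them in the convex hull
of `S`. By reflexivity (Banach–Alaoglu in the bidual) these solutions have a weak cluster point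
`w` along an ultrafilter, which satisfies the inequality for every `v` in the ball. Minty's trick
turns this into `0 ≤ (T w - f) (v - w)`; testing `v = 0` and using coercivity puts `w` in the
open ball, so `T w = f`.

Continuity of the inverse: if `T uₙ → T u₀`, coercivity bounds `uₙ`, every weak ultrafilter limit
`w` of `uₙ` satisfies `T w = T u₀` by the same Minty argument, so `uₙ ⇀ u₀`; then
`T uₙ (uₙ - u₀) → 0` and (S₊) gives `uₙ → u₀`.
-/

namespace Matrix

variable {ι : Type*} [Fintype ι]

theorem dotProduct_mulVec_self_nonneg (M : Matrix ι ι ℝ) (hM : ∀ i j, 0 ≤ M i j + M j i)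
    {x : ι → ℝ} (hx : 0 ≤ x) : 0 ≤ x ⬝ᵥ M *ᵥ x := by
  have h : 2 * (x ⬝ᵥ M *ᵥ x) = ∑ i, ∑ j, x i * x j * (M i j + M j i) := by
    rw [two_mul]
    nth_rw 2 [← dotProduct_transpose_mulVec]
    simp only [dotProduct, mulVec, transpose_apply, Finset.mul_sum, ← Finset.sum_add_distrib]
    exact Finset.sum_congr rfl fun i _ => Finset.sum_congr rfl fun j _ => by ring
  have : 0 ≤ ∑ i, ∑ j, x i * x j * (M i j + M j i) :=
    Finset.sum_nonneg fun i _ => Finset.sum_nonneg fun j _ =>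
      mul_nonneg (mul_nonneg (hx i) (hx j)) (hM i j)
  linarith

/-- Von Neumann's minimax theorem: the bilinear game `x ⬝ᵥ M *ᵥ y` on the simplex has a saddle
point `(a, l)`, and its value is `≥ a ⬝ᵥ M *ᵥ a ≥ 0`. -/
theorem exists_mem_stdSimplex_mulVec_nonneg [Nonempty ι] (M : Matrix ι ι ℝ)
    (hM : ∀ i j, 0 ≤ M i j + M j i) : ∃ l ∈ stdSimplex ℝ ι, 0 ≤ M *ᵥ l := by
  classical
  let B : (ι → ℝ) →ₗ[ℝ] (ι → ℝ) →ₗ[ℝ] ℝ := toLinearMap₂' ℝ M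
  have hB : ∀ x y, B x y = x ⬝ᵥ M *ᵥ y := toLinearMap₂'_apply' M
  have hΔ := convex_stdSimplex ℝ ι
  have hne : (stdSimplex ℝ ι).Nonempty := ⟨_, single_mem_stdSimplex ℝ (Classical.arbitrary ι)⟩
  obtain ⟨a, ha, l, hl, hsaddle⟩ := Sion.exists_isSaddlePointOn (f := fun x y => B x y)
    hne hΔ (isCompact_stdSimplex ℝ ι)
    (fun y _ => (B.flip y).continuous_of_finiteDimensional.continuousOn.lowerSemicontinuousOn)
    (fun y _ => ((B.flip y).convexOn hΔ).quasiconvexOn)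
    hΔ hne (isCompact_stdSimplex ℝ ι)
    (fun x _ => (B x).continuous_of_finiteDimensional.continuousOn.upperSemicontinuousOn)
    (fun x _ => ((B x).concaveOn hΔ).quasiconcaveOn)
  refine ⟨l, hl, fun i => ?_⟩
  have hvalue := hsaddle _ (single_mem_stdSimplex ℝ i) a ha
  simp only [hB, single_one_dotProduct] at hvalue
  exact (dotProduct_mulVec_self_nonneg M hM ha.1).trans hvalue

end Matrix

section

variable {E : Type*} [NormedAddCommGroup E] [NormedSpace ℝ E]

theorem Ultrafilter.exists_norm_le_forall_tendsto_apply
    (hrefl : Function.Surjective (NormedSpace.inclusionInDoubleDual ℝ E))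
    {ι : Type*} (U : Ultrafilter ι) {u : ι → E} {C : ℝ} (hu : ∀ i, ‖u i‖ ≤ C) :
    ∃ w : E, ‖w‖ ≤ C ∧
      ∀ φ : StrongDual ℝ E, Tendsto (fun i => φ (u i)) (U : Filter ι) (𝓝 (φ w)) := by
  let J := NormedSpace.inclusionInDoubleDualLi (E := E) ℝ
  let v : ι → WeakDual ℝ (StrongDual ℝ E) := fun i => StrongDual.toWeakDual (J (u i))
  have hball (Ψ : StrongDual ℝ (StrongDual ℝ E)) := mem_closedBall_zero_iff (a := Ψ) (r := C)
  obtain ⟨Φ, hΦC, hΦ⟩ := (WeakDual.isCompact_closedBall 0 C).ultrafilter_le_nhds (U.map v)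
    (tendsto_principal.2 (.of_forall fun i => (hball _).2 ((J.norm_map _).trans_le (hu i))))
  obtain ⟨w, hw⟩ := hrefl (WeakDual.toStrongDual Φ)
  have hJw : J w = WeakDual.toStrongDual Φ := hw
  refine ⟨w, (J.norm_map w).symm.trans_le (hJw ▸ (hball _).1 hΦC), fun φ => ?_⟩
  have hΦφ : topDualPairing ℝ (StrongDual ℝ E) Φ φ = φ w := by
    change WeakDual.toStrongDual Φ φ = φ w
    rw [← hJw]; rfl
  have hlim := tendsto_iff_forall_eval_tendsto_topDualPairing.1 hΦ φ
  rwa [hΦφ] at hlim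

theorem tendsto_apply_of_tendsto_of_weakly {ι : Type*} {l : Filter ι}
    {φ : ι → StrongDual ℝ E} {φ₀ : StrongDual ℝ E} (hφ : Tendsto φ l (𝓝 φ₀))
    {x : ι → E} {x₀ : E} {C : ℝ} (hx : ∀ i, ‖x i‖ ≤ C)
    (hweak : ∀ ψ : StrongDual ℝ E, Tendsto (fun i => ψ (x i)) l (𝓝 (ψ x₀))) :
    Tendsto (fun i => φ i (x i)) l (𝓝 (φ₀ x₀)) := by
  have hsmall : Tendsto (fun i => (φ i - φ₀) (x i)) l (𝓝 0) := by
    refine squeeze_zero_norm (fun i => ((φ i - φ₀).le_opNorm (x i)).trans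
      (mul_le_mul_of_nonneg_left (hx i) (norm_nonneg _))) ?_
    simpa using (tendsto_iff_norm_sub_tendsto_zero.1 hφ).mul_const C
  simpa using hsmall.add (hweak φ₀)

theorem tendsto_add_smul_nhdsGT (w x : E) :
    Tendsto (fun t : ℝ => w + t • x) (𝓝[>] 0) (𝓝 w) := by
  have : Continuous fun t : ℝ => w + t • x := by fun_prop
  simpa using (this.tendsto 0).mono_left nhdsWithin_le_nhds

theorem ContinuousLinearMap.eq_zero_of_eventually_nonneg_apply_sub {φ : StrongDual ℝ E}
    {w : E} (h : ∀ᶠ v in 𝓝 w, 0 ≤ φ (v - w)) : φ = 0 := by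
  have hnonneg : ∀ x, 0 ≤ φ x := fun x => by
    obtain ⟨t, ht, htpos⟩ :=
      (((tendsto_add_smul_nhdsGT w x).eventually h).and self_mem_nhdsWithin).exists
    rw [add_sub_cancel_left, map_smul, smul_eq_mul] at ht
    exact nonneg_of_mul_nonneg_right ht htpos
  ext x
  exact le_antisymm (by simpa using hnonneg (-x)) (hnonneg x)

section MonotoneOperator

variable {T : E → StrongDual ℝ E} {f : StrongDual ℝ E}

theorem exists_mem_forall_apply_sub_nonneg (hmono : ∀ a b, 0 ≤ (T a - T b) (a - b))
    {K : Set E} (hK : Convex ℝ K) (hKne : K.Nonempty) (S : Finset E) (hS : ↑S ⊆ K) :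
    ∃ u ∈ K, ∀ v ∈ S, 0 ≤ (T v - f) (v - u) := by
  rcases S.eq_empty_or_nonempty with rfl | hSne
  · simpa [Set.Nonempty] using hKne
  have := hSne.to_subtype
  let M : Matrix S S ℝ := fun i j => (T i - f) (i - j)
  have hM : ∀ i j, 0 ≤ M i j + M j i := fun i j => by
    have : M i j + M j i = (T i - T j) (i - j) := by
      simp only [M, sub_apply, map_sub]; ring
    exact this ▸ hmono i j
  obtain ⟨l, hl, hMl⟩ := M.exists_mem_stdSimplex_mulVec_nonneg hM
  refine ⟨∑ j, l j • (j : E), hK.sum_mem (fun j _ => hl.1 j) hl.2 fun j _ => hS j.2,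
    fun v hv => ?_⟩
  have hsplit : v - ∑ j, l j • (j : E) = ∑ j : S, l j • (v - j) := by
    simp only [smul_sub, Finset.sum_sub_distrib, ← Finset.sum_smul, hl.2, one_smul]
  have : (T v - f) (v - ∑ j, l j • (j : E)) = M.mulVec l ⟨v, hv⟩ := by
    simp only [hsplit, map_sum, map_smul, smul_eq_mul, Matrix.mulVec, dotProduct, M, mul_comm]
  exact this ▸ hMl _

/-- Minty's trick: test the inequality at `w + t • (v - w)` and let `t → 0⁺`. -/
theorem Convex.forall_apply_sub_nonneg_of_minty {K : Set E} (hK : Convex ℝ K) {w : E}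
    (hw : w ∈ K) (hT : ContinuousAt T w) (h : ∀ v ∈ K, 0 ≤ (T v - f) (v - w)) :
    ∀ v ∈ K, 0 ≤ (T w - f) (v - w) := by
  intro v hv
  have hlim : Tendsto (fun t : ℝ => (T (w + t • (v - w)) - f) (v - w)) (𝓝[>] 0)
      (𝓝 ((T w - f) (v - w))) :=
    (((ContinuousLinearMap.apply ℝ ℝ (v - w)).continuous.tendsto _).comp
      ((hT.tendsto.comp (tendsto_add_smul_nhdsGT w (v - w))).sub_const f))
  refine ge_of_tendsto hlim ?_
  filter_upwards [Ioc_mem_nhdsGT one_pos] with t ht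
  have := h _ (hK.add_smul_sub_mem hw hv (Set.Ioc_subset_Icc_self ht))
  rw [add_sub_cancel_left, map_smul, smul_eq_mul] at this
  exact nonneg_of_mul_nonneg_right this ht.1

theorem exists_norm_lt_of_apply_self_le
    (hcoer : ∀ M : ℝ, ∃ R : ℝ, ∀ u : E, R ≤ ‖u‖ → M ≤ T u u / ‖u‖) (K : ℝ) :
    ∃ R, ∀ u, T u u ≤ K * ‖u‖ → ‖u‖ < R := by
  obtain ⟨R, hR⟩ := hcoer (K + 1)
  refine ⟨max R 1, fun u hu => ?_⟩
  by_contra! hRu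
  have hpos : 0 < ‖u‖ := zero_lt_one.trans_le ((le_max_right _ _).trans hRu)
  have := (le_div_iff₀ hpos).1 (hR u ((le_max_left _ _).trans hRu))
  linarith

theorem exists_norm_lt_of_norm_apply_le
    (hcoer : ∀ M : ℝ, ∃ R : ℝ, ∀ u : E, R ≤ ‖u‖ → M ≤ T u u / ‖u‖) (K : ℝ) :
    ∃ R, ∀ u, ‖T u‖ ≤ K → ‖u‖ < R := by
  obtain ⟨R, hR⟩ := exists_norm_lt_of_apply_self_le hcoer K
  refine ⟨R, fun u hu => hR u ?_⟩
  calc T u u ≤ ‖T u‖ * ‖u‖ := (le_abs_self _).trans ((T u).le_opNorm u)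
    _ ≤ K * ‖u‖ := mul_le_mul_of_nonneg_right hu (norm_nonneg u)

theorem exists_apply_eq_of_coercive
    (hrefl : Function.Surjective (NormedSpace.inclusionInDoubleDual ℝ E)) (hcont : Continuous T)
    (hmono : ∀ a b, 0 ≤ (T a - T b) (a - b))
    (hcoer : ∀ M : ℝ, ∃ R : ℝ, ∀ u : E, R ≤ ‖u‖ → M ≤ T u u / ‖u‖) (f : StrongDual ℝ E) :
    ∃ w, T w = f := by
  classical
  obtain ⟨R, hR⟩ := exists_norm_lt_of_apply_self_le hcoer ‖f‖
  have hR0 : 0 < R := by simpa using hR 0 (by simp)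
  let K := Metric.closedBall (0 : E) R
  have hK : Convex ℝ K := convex_closedBall 0 R
  have hgalerkin (S : Finset E) : ∃ u ∈ K, ∀ v ∈ S.filter (· ∈ K), 0 ≤ (T v - f) (v - u) :=
    exists_mem_forall_apply_sub_nonneg hmono hK ⟨0, by simpa [K] using hR0.le⟩ _
      fun v hv => (Finset.mem_filter.1 hv).2
  choose u huK hu using hgalerkin
  let U := Ultrafilter.of (atTop : Filter (Finset E))
  obtain ⟨w, hw_le, hw⟩ := U.exists_norm_le_forall_tendsto_apply hrefl
    fun S => mem_closedBall_zero_iff.1 (huK S)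
  have hwK : w ∈ K := mem_closedBall_zero_iff.2 hw_le
  have hVI : ∀ v ∈ K, 0 ≤ (T v - f) (v - w) := fun v hv => by
    have hlim : Tendsto (fun S => (T v - f) (v - u S)) U (𝓝 ((T v - f) (v - w))) := by
      simpa only [map_sub] using tendsto_const_nhds.sub (hw (T v - f))
    refine ge_of_tendsto hlim ?_
    filter_upwards [(Ultrafilter.of_le _) (eventually_ge_atTop {v})] with S hS
    exact hu S v (Finset.mem_filter.2 ⟨hS (Finset.mem_singleton_self v), hv⟩)
  have hVI' := hK.forall_apply_sub_nonneg_of_minty hwK hcont.continuousAt hVI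
  have hw_lt : ‖w‖ < R := by
    refine hR w ?_
    have h0 := hVI' 0 (by simpa [K] using hR0.le)
    simp only [zero_sub, map_neg, sub_apply, neg_nonneg, sub_nonpos] at h0
    exact h0.trans ((le_abs_self _).trans (f.le_opNorm w))
  refine ⟨w, sub_eq_zero.1 (ContinuousLinearMap.eq_zero_of_eventually_nonneg_apply_sub (w := w) ?_)⟩
  filter_upwards [Metric.closedBall_mem_nhds_of_mem (mem_ball_zero_iff.2 hw_lt)] with v hv
  exact hVI' v hv

theorem apply_eq_of_weakly_tendsto (hcont : Continuous T)
    (hmono : ∀ a b, 0 ≤ (T a - T b) (a - b)) {ι : Type*} {l : Filter ι} [l.NeBot]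
    {u : ι → E} {w : E} {C : ℝ} (hu : ∀ i, ‖u i‖ ≤ C)
    (hweak : ∀ φ : StrongDual ℝ E, Tendsto (fun i => φ (u i)) l (𝓝 (φ w)))
    {g : StrongDual ℝ E} (hTu : Tendsto (fun i => T (u i)) l (𝓝 g)) : T w = g := by
  have hVI : ∀ z ∈ Set.univ, 0 ≤ (T z - g) (z - w) := fun z _ => by
    refine ge_of_tendsto (tendsto_apply_of_tendsto_of_weakly (tendsto_const_nhds.sub hTu)
      (C := ‖z‖ + C) (fun i => (norm_sub_le _ _).trans (by linarith [hu i])) fun ψ => ?_)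
      (.of_forall fun i => hmono z (u i))
    simpa using tendsto_const_nhds.sub (hweak ψ)
  have hVI' := convex_univ.forall_apply_sub_nonneg_of_minty trivial hcont.continuousAt hVI
  exact sub_eq_zero.1 <| ContinuousLinearMap.eq_zero_of_eventually_nonneg_apply_sub
    (.of_forall fun v => hVI' v trivial)

theorem tendsto_of_tendsto_apply
    (hrefl : Function.Surjective (NormedSpace.inclusionInDoubleDual ℝ E)) (hcont : Continuous T)
    (hmono : ∀ a b, 0 ≤ (T a - T b) (a - b)) (hinj : Function.Injective T)
    (hcoer : ∀ M : ℝ, ∃ R : ℝ, ∀ u : E, R ≤ ‖u‖ → M ≤ T u u / ‖u‖)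
    (hSplus : ∀ (u : ℕ → E) (u₀ : E),
      (∀ φ : StrongDual ℝ E, Tendsto (fun n => φ (u n)) atTop (𝓝 (φ u₀))) →
      limsup (fun n => T (u n) (u n - u₀)) atTop ≤ 0 →
      Tendsto u atTop (𝓝 u₀))
    {u : ℕ → E} {u₀ : E} (hTu : Tendsto (fun n => T (u n)) atTop (𝓝 (T u₀))) :
    Tendsto u atTop (𝓝 u₀) := by
  obtain ⟨K, hK⟩ := hTu.norm.bddAbove_range
  obtain ⟨C, hC⟩ := exists_norm_lt_of_norm_apply_le hcoer K
  have hu : ∀ n, ‖u n‖ ≤ C := fun n => (hC _ (hK ⟨n, rfl⟩)).le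
  have hweak : ∀ φ : StrongDual ℝ E, Tendsto (fun n => φ (u n)) atTop (𝓝 (φ u₀)) := by
    intro φ
    rw [tendsto_iff_ultrafilter]
    intro U hU
    obtain ⟨w, -, hw⟩ := U.exists_norm_le_forall_tendsto_apply hrefl hu
    obtain rfl : w = u₀ := hinj (apply_eq_of_weakly_tendsto hcont hmono hu hw (hTu.mono_left hU))
    exact hw φ
  refine hSplus u u₀ hweak (Tendsto.limsup_eq ?_).le
  simpa using tendsto_apply_of_tendsto_of_weakly hTu (x := fun n => u n - u₀) (x₀ := 0)
    (C := C + ‖u₀‖) (fun n => (norm_sub_le _ _).trans (by linarith [hu n]))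
    fun ψ => by simpa using (hweak ψ).sub_const (ψ u₀)

end MonotoneOperator

end

theorem minty_browder_homeomorphism_general {E : Type*} [NormedAddCommGroup E]
    [NormedSpace ℝ E]
    (hrefl : Function.Surjective (NormedSpace.inclusionInDoubleDual ℝ E))
    (T : E → StrongDual ℝ E)
    (hcont : Continuous T)
    (hmono : ∀ u v : E, u ≠ v → 0 < (T u - T v) (u - v))
    (hcoer : ∀ M : ℝ, ∃ R : ℝ, ∀ u : E, R ≤ ‖u‖ → M ≤ T u u / ‖u‖)
    (hSplus : ∀ (u : ℕ → E) (u₀ : E),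
      (∀ φ : StrongDual ℝ E, Tendsto (fun n => φ (u n)) atTop (nhds (φ u₀))) →
      limsup (fun n => T (u n) (u n - u₀)) atTop ≤ 0 →
      Tendsto u atTop (nhds u₀)) :
    Function.Bijective T ∧
      ∃ Tinv : StrongDual ℝ E → E,
        (∀ u, Tinv (T u) = u) ∧ (∀ f, T (Tinv f) = f) ∧
        Continuous Tinv ∧
        ∀ s : Set (StrongDual ℝ E), IsBounded s → IsBounded (Tinv '' s) := by
  have hmono' : ∀ a b, 0 ≤ (T a - T b) (a - b) := fun a b => by
    rcases eq_or_ne a b with rfl | hab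
    · simp
    · exact (hmono a b hab).le
  have hinj : Function.Injective T := fun a b hab => by
    by_contra hne
    simpa [hab] using hmono a b hne
  have hbij : Function.Bijective T :=
    ⟨hinj, exists_apply_eq_of_coercive hrefl hcont hmono' hcoer⟩
  let Tinv := (Equiv.ofBijective T hbij).symm
  have hTTinv : ∀ g, T (Tinv g) = g := Equiv.ofBijective_apply_symm_apply T hbij
  refine ⟨hbij, Tinv, Equiv.ofBijective_symm_apply_apply T hbij, hTTinv, ?_, fun s hs => ?_⟩
  · refine continuous_iff_seqContinuous.2 fun g g₀ hg => ?_
    exact tendsto_of_tendsto_apply hrefl hcont hmono' hinj hcoer hSplus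
      (by simpa only [Function.comp_apply, hTTinv] using hg)
  · obtain ⟨K, hK⟩ := isBounded_iff_forall_norm_le.1 hs
    obtain ⟨R, hR⟩ := exists_norm_lt_of_norm_apply_le hcoer K
    refine isBounded_iff_forall_norm_le.2 ⟨R, ?_⟩
    rintro _ ⟨g, hg, rfl⟩
    exact (hR _ (by simpa only [hTTinv] using hK g hg)).le

/-- A bounded, continuous, strictly monotone, coercive operator of type `(S₊)`
from a reflexive Banach space to its dual is a bijection whose inverse is
continuous and maps bounded sets to bounded sets (Minty–Browder). -/
theorem minty_browder_homeomorphism {E : Type*} [NormedAddCommGroup E]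
    [NormedSpace ℝ E] [CompleteSpace E]
    (hrefl : Function.Surjective (NormedSpace.inclusionInDoubleDual ℝ E))
    (T : E → StrongDual ℝ E)
    (hbdd : ∀ s : Set E, IsBounded s → IsBounded (T '' s))
    (hcont : Continuous T)
    (hmono : ∀ u v : E, u ≠ v → 0 < (T u - T v) (u - v))
    (hcoer : ∀ M : ℝ, ∃ R : ℝ, ∀ u : E, R ≤ ‖u‖ → M ≤ T u u / ‖u‖)
    (hSplus : ∀ (u : ℕ → E) (u₀ : E),
      (∀ φ : StrongDual ℝ E, Tendsto (fun n => φ (u n)) atTop (nhds (φ u₀))) →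
      limsup (fun n => T (u n) (u n - u₀)) atTop ≤ 0 →
      Tendsto u atTop (nhds u₀)) :
    Function.Bijective T ∧
      ∃ Tinv : StrongDual ℝ E → E,
        (∀ u, Tinv (T u) = u) ∧ (∀ f, T (Tinv f) = f) ∧
        Continuous Tinv ∧
        ∀ s : Set (StrongDual ℝ E), IsBounded s → IsBounded (Tinv '' s) :=
  minty_browder_homeomorphism_general hrefl T hcont hmono hcoer hSplus
end

section
/- Let (X, μ) be a finite measure space, β ∈ L^∞(X) with β ≥ 0, λ > 0, and r, q : X → ℝ measurable with 1 < r⁻ ≤ r(x) ≤ r⁺ ≤ q⁻ ≤ q(x) ≤ q⁺ < ∞. Then the operator S₁(w)(x) = -λ β(x) |w(x)|^{r(x)-2} w(x) maps L^{q(x)}(X,μ) into L^{q'(x)}(X,μ) and is bounded, i.e., it maps norm-bounded subsets of L^{q(x)} to norm-bounded subsets of L^{q'(x)}. -/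
open MeasureTheory Filter

/-- Monotonicity of the modular in the scaling parameter. -/
lemma vModular_anti {X : Type*} [MeasurableSpace X] {μ : Measure X}
    {q w : X → ℝ} (hq : ∀ x, 0 ≤ q x) {l L : ℝ} (hl : 0 < l) (hlL : l ≤ L) :
    vModular μ q (fun x => w x / L) ≤ vModular μ q (fun x => w x / l) := by
  refine lintegral_mono fun x => ?_
  apply ENNReal.ofReal_le_ofReal
  apply Real.rpow_le_rpow (abs_nonneg _) ?_ (hq x)
  rw [abs_div, abs_div, abs_of_pos hl, abs_of_pos (lt_of_lt_of_le hl hlL)]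
  gcongr

/-- From membership one can find a scaling `L ≥ 1` making the modular at most one. -/
lemma exists_scale {X : Type*} [MeasurableSpace X] {μ : Measure X}
    {q w : X → ℝ} (hq1 : ∀ x, 1 ≤ q x) (hw : MemLp' μ q w) :
    ∃ L : ℝ, 1 ≤ L ∧ vModular μ q (fun x => w x / L) ≤ 1 := by
  have hq0 : ∀ x, 0 ≤ q x := fun x => le_trans zero_le_one (hq1 x)
  obtain ⟨-, l, hl, hfin⟩ := hw
  set m0 : ℝ := (vModular μ q (fun x => w x / l)).toReal with hm0
  have hm0nn : 0 ≤ m0 := ENNReal.toReal_nonneg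
  set t : ℝ := max 1 m0 with ht
  have ht1 : 1 ≤ t := le_max_left _ _
  have ht0 : (0:ℝ) < t := lt_of_lt_of_le one_pos ht1
  refine ⟨max (t * l) 1, le_max_right _ _, ?_⟩
  have step1 : vModular μ q (fun x => w x / max (t * l) 1) ≤
      vModular μ q (fun x => w x / (t * l)) :=
    vModular_anti hq0 (mul_pos ht0 hl) (le_max_left _ _)
  have step2 : vModular μ q (fun x => w x / (t * l)) ≤
      ENNReal.ofReal (1 / t) * vModular μ q (fun x => w x / l) := by
    have hpt : ∀ x, ENNReal.ofReal (|w x / (t * l)| ^ q x) ≤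
        ENNReal.ofReal (1 / t) * ENNReal.ofReal (|w x / l| ^ q x) := by
      intro x
      rw [← ENNReal.ofReal_mul (by positivity)]
      apply ENNReal.ofReal_le_ofReal
      have heq : w x / (t * l) = (w x / l) / t := by
        rw [mul_comm, ← div_div]
      rw [heq, abs_div, abs_of_pos ht0, Real.div_rpow (abs_nonneg _) ht0.le]
      have htq : t ≤ t ^ q x := by
        calc t = t ^ (1:ℝ) := (Real.rpow_one t).symm
        _ ≤ t ^ q x := Real.rpow_le_rpow_of_exponent_le ht1 (hq1 x)
      rw [one_div, inv_mul_eq_div]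
      gcongr
    calc vModular μ q (fun x => w x / (t * l))
        ≤ ∫⁻ x, ENNReal.ofReal (1 / t) * ENNReal.ofReal (|w x / l| ^ q x) ∂μ :=
          lintegral_mono hpt
      _ = ENNReal.ofReal (1 / t) * vModular μ q (fun x => w x / l) :=
          lintegral_const_mul' _ _ ENNReal.ofReal_ne_top
  have step3 : ENNReal.ofReal (1 / t) * vModular μ q (fun x => w x / l) ≤ 1 := by
    rw [show vModular μ q (fun x => w x / l) = ENNReal.ofReal m0 from
      (ENNReal.ofReal_toReal hfin.ne).symm,
      ← ENNReal.ofReal_mul (by positivity)]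
    apply ENNReal.ofReal_le_one.mpr
    rw [one_div, inv_mul_eq_div, div_le_one ht0]
    exact le_max_right _ _
  exact le_trans step1 (le_trans step2 step3)

/-- The operator `S₁(w)(x) = -λ β(x) |w(x)|^{r(x)-2} w(x)` maps `L^{q(x)}` into
`L^{q'(x)}` and is bounded. -/
theorem signed_power_operator_bounded {X : Type*} [MeasurableSpace X]
    (μ : Measure X) [IsFiniteMeasure μ]
    (β : X → ℝ) (hβmeas : Measurable β) (hβpos : ∀ x, 0 ≤ β x)
    (Cβ : ℝ) (hβbd : ∀ᵐ x ∂μ, |β x| ≤ Cβ)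
    (lam : ℝ) (hlam : 0 < lam)
    (r q q' : X → ℝ) (hr : Measurable r) (hqmeas : Measurable q)
    (hq'meas : Measurable q')
    (rm rM qm qM : ℝ)
    (hrm : 1 < rm) (hrbd : ∀ x, rm ≤ r x ∧ r x ≤ rM)
    (hrM_qm : rM ≤ qm) (hqbd : ∀ x, qm ≤ q x ∧ q x ≤ qM)
    (hconj : ∀ x, 1 / q x + 1 / q' x = 1) :
    (∀ w, MemLp' μ q w →
        MemLp' μ q' (fun x => -lam * β x * (|w x| ^ (r x - 2) * w x))) ∧
      ∀ B : ℝ, ∃ B' : ℝ, ∀ w, MemLp' μ q w → luxNorm μ q w ≤ B →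
        luxNorm μ q' (fun x => -lam * β x * (|w x| ^ (r x - 2) * w x)) ≤ B' := by
  have hq1x : ∀ x, 1 ≤ q x := fun x => by
    linarith [(hrbd x).1, (hrbd x).2, (hqbd x).1, hrM_qm]
  have hq0 : ∀ x, 0 ≤ q x := fun x => le_trans zero_le_one (hq1x x)
  set C0 : ℝ := max Cβ 0 with hC0def
  have hC0 : 0 ≤ C0 := le_max_right _ _
  set m : ℝ := (μ Set.univ).toReal with hmdef
  have hm : 0 ≤ m := ENNReal.toReal_nonneg
  -- measurability of the operator
  have hSmeas : ∀ w : X → ℝ, Measurable w →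
      Measurable (fun x => -lam * β x * (|w x| ^ (r x - 2) * w x)) := fun w hw =>
    (measurable_const.mul hβmeas).mul ((hw.abs.pow (hr.sub measurable_const)).mul hw)
  -- pointwise exponent facts
  have hq'facts : ∀ x, 1 ≤ q' x ∧ (r x - 1) * q' x ≤ q x := by
    intro x
    obtain ⟨hr1, hr2⟩ := hrbd x
    obtain ⟨hq1, hq2⟩ := hqbd x
    have hqx1 : 1 < q x := by linarith
    have hqx0 : q x ≠ 0 := by linarith
    have h := hconj x
    have hq'0 : q' x ≠ 0 := by
      intro h0
      rw [h0, div_zero, add_zero, div_eq_one_iff_eq hqx0] at h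
      linarith
    have hq'x : q' x = q x / (q x - 1) := by
      field_simp at h
      rw [eq_div_iff (show q x - 1 ≠ 0 by linarith)]
      linear_combination -h
    constructor
    · rw [hq'x, le_div_iff₀ (by linarith)]
      linarith
    · rw [hq'x, mul_div_assoc', div_le_iff₀ (by linarith)]
      nlinarith
  -- the key modular estimate
  have key : ∀ (w : X → ℝ), Measurable w → ∀ L : ℝ, 1 ≤ L →
      vModular μ q (fun x => w x / L) ≤ 1 →
      0 < max (lam * C0 * L ^ rM * (m + 1)) 1 ∧
        vModular μ q'
          (fun x => (-lam * β x * (|w x| ^ (r x - 2) * w x)) /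
            max (lam * C0 * L ^ rM * (m + 1)) 1) ≤ 1 := by
    intro w hw L hL hmod
    have hL0 : (0:ℝ) < L := lt_of_lt_of_le one_pos hL
    set K : ℝ := lam * C0 * L ^ rM with hKdef
    have hK0 : 0 ≤ K := by positivity
    set B : ℝ := max (K * (m + 1)) 1 with hBdef
    have hB1 : (1:ℝ) ≤ B := le_max_right _ _
    have hB0 : (0:ℝ) < B := lt_of_lt_of_le one_pos hB1
    refine ⟨hB0, ?_⟩
    have hKB : K * (m + 1) ≤ B := le_max_left _ _
    have hKdiv1 : K / B ≤ 1 := by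
      rw [div_le_one hB0]
      nlinarith
    have hae : ∀ᵐ x ∂μ, β x ≤ C0 :=
      hβbd.mono fun x hx => le_trans (le_trans (le_abs_self _) hx) (le_max_left _ _)
    have hpt : ∀ᵐ x ∂μ,
        ENNReal.ofReal (|(-lam * β x * (|w x| ^ (r x - 2) * w x)) / B| ^ q' x) ≤
          ENNReal.ofReal (K / B) * ENNReal.ofReal (1 + |w x / L| ^ q x) := by
      refine hae.mono fun x hβx => ?_
      obtain ⟨hr1, hr2⟩ := hrbd x
      obtain ⟨hq1, hq2⟩ := hqbd x
      obtain ⟨hq'1, hexp⟩ := hq'facts x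
      have hq'0 : (0:ℝ) ≤ q' x := by linarith
      -- absolute value of the numerator
      have habs : |(-lam * β x * (|w x| ^ (r x - 2) * w x))| =
          lam * β x * |w x| ^ (r x - 1) := by
        rcases eq_or_ne (w x) 0 with h0 | h0
        · rw [h0]
          simp [Real.zero_rpow (show r x - 1 ≠ 0 by linarith)]
        · have hwpos : 0 < |w x| := abs_pos.mpr h0
          have h1 : |w x| ^ (r x - 2) * |w x| = |w x| ^ (r x - 1) := by
            calc |w x| ^ (r x - 2) * |w x|
                = |w x| ^ (r x - 2) * |w x| ^ (1:ℝ) := by rw [Real.rpow_one]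
              _ = |w x| ^ (r x - 2 + 1) := (Real.rpow_add hwpos _ _).symm
              _ = |w x| ^ (r x - 1) := by ring_nf
          rw [abs_mul, abs_mul, abs_mul, abs_neg, abs_of_pos hlam,
            abs_of_nonneg (hβpos x),
            abs_of_nonneg (Real.rpow_nonneg (abs_nonneg _) _), h1]
      set a : ℝ := |w x / L| with hadef
      have ha : 0 ≤ a := abs_nonneg _
      have hwL : |w x| = L * a := by
        rw [hadef, abs_div, abs_of_pos hL0]
        field_simp
      have hnum : lam * β x * |w x| ^ (r x - 1) ≤ K * a ^ (r x - 1) := by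
        rw [hwL, Real.mul_rpow hL0.le ha]
        have : lam * β x * (L ^ (r x - 1) * a ^ (r x - 1)) ≤
            lam * C0 * (L ^ rM * a ^ (r x - 1)) := by
          have h2 : L ^ (r x - 1) ≤ L ^ rM :=
            Real.rpow_le_rpow_of_exponent_le hL (by linarith)
          have h3 : 0 ≤ a ^ (r x - 1) := Real.rpow_nonneg ha _
          exact mul_le_mul (mul_le_mul_of_nonneg_left hβx hlam.le)
            (mul_le_mul_of_nonneg_right h2 h3)
            (mul_nonneg (Real.rpow_nonneg hL0.le _) h3) (mul_nonneg hlam.le hC0)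
        calc lam * β x * (L ^ (r x - 1) * a ^ (r x - 1))
            ≤ lam * C0 * (L ^ rM * a ^ (r x - 1)) := this
          _ = K * a ^ (r x - 1) := by rw [hKdef]; ring
      have hdiv : |(-lam * β x * (|w x| ^ (r x - 2) * w x)) / B| ≤
          (K / B) * a ^ (r x - 1) := by
        rw [abs_div, abs_of_pos hB0, habs, div_le_iff₀ hB0]
        calc lam * β x * |w x| ^ (r x - 1) ≤ K * a ^ (r x - 1) := hnum
          _ = K / B * a ^ (r x - 1) * B := by field_simp
      have hKBpow : (K / B) ^ q' x ≤ K / B := by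
        rcases eq_or_lt_of_le (div_nonneg hK0 hB0.le) with h | h
        · rw [← h, Real.zero_rpow (show q' x ≠ 0 by linarith)]
        · calc (K / B) ^ q' x ≤ (K / B) ^ (1:ℝ) :=
              Real.rpow_le_rpow_of_exponent_ge h hKdiv1 hq'1
            _ = K / B := Real.rpow_one _
      have hapow : a ^ ((r x - 1) * q' x) ≤ 1 + a ^ q x := by
        have hexp0 : 0 ≤ (r x - 1) * q' x := mul_nonneg (by linarith) hq'0
        have haq : 0 ≤ a ^ q x := Real.rpow_nonneg ha _
        rcases le_or_gt a 1 with h | h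
        · linarith [Real.rpow_le_one ha h hexp0]
        · linarith [Real.rpow_le_rpow_of_exponent_le h.le hexp]
      rw [← ENNReal.ofReal_mul (div_nonneg hK0 hB0.le)]
      apply ENNReal.ofReal_le_ofReal
      calc |(-lam * β x * (|w x| ^ (r x - 2) * w x)) / B| ^ q' x
          ≤ ((K / B) * a ^ (r x - 1)) ^ q' x :=
            Real.rpow_le_rpow (abs_nonneg _) hdiv hq'0
        _ = (K / B) ^ q' x * (a ^ (r x - 1)) ^ q' x :=
            Real.mul_rpow (div_nonneg hK0 hB0.le) (Real.rpow_nonneg ha _)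
        _ = (K / B) ^ q' x * a ^ ((r x - 1) * q' x) := by
            rw [← Real.rpow_mul ha]
        _ ≤ (K / B) * (1 + a ^ q x) := by
            apply mul_le_mul hKBpow hapow (Real.rpow_nonneg ha _)
              (div_nonneg hK0 hB0.le)
    simp only [vModular]
    calc (∫⁻ x, ENNReal.ofReal
            (|(-lam * β x * (|w x| ^ (r x - 2) * w x)) / B| ^ q' x) ∂μ)
        ≤ ∫⁻ x, ENNReal.ofReal (K / B) * ENNReal.ofReal (1 + |w x / L| ^ q x) ∂μ :=
          lintegral_mono_ae hpt
      _ = ENNReal.ofReal (K / B) *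
          ∫⁻ x, ENNReal.ofReal (1 + |w x / L| ^ q x) ∂μ :=
          lintegral_const_mul' _ _ ENNReal.ofReal_ne_top
      _ = ENNReal.ofReal (K / B) *
          (μ Set.univ + vModular μ q (fun x => w x / L)) := by
          congr 1
          simp_rw [fun x => ENNReal.ofReal_add zero_le_one
            (Real.rpow_nonneg (abs_nonneg (w x / L)) (q x)), ENNReal.ofReal_one]
          rw [lintegral_add_left measurable_const, lintegral_one]
          rfl
      _ ≤ ENNReal.ofReal (K / B) * (μ Set.univ + 1) := by
          gcongr
      _ = ENNReal.ofReal (K / B) * ENNReal.ofReal (m + 1) := by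
          rw [ENNReal.ofReal_add hm zero_le_one, ENNReal.ofReal_one,
            ENNReal.ofReal_toReal (measure_ne_top μ _)]
      _ ≤ 1 := by
          rw [← ENNReal.ofReal_mul (div_nonneg hK0 hB0.le)]
          apply ENNReal.ofReal_le_one.mpr
          rw [div_mul_eq_mul_div, div_le_one hB0]
          exact hKB
  constructor
  · -- membership
    intro w hw
    obtain ⟨L, hL, hmod⟩ := exists_scale hq1x hw
    obtain ⟨hBpos, hkey⟩ := key w hw.1 L hL hmod
    exact ⟨hSmeas w hw.1, _, hBpos, lt_of_le_of_lt hkey ENNReal.one_lt_top⟩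
  · -- boundedness
    intro B
    set L : ℝ := max B 0 + 1 with hLdef
    have hL1 : (1:ℝ) ≤ L := by
      have := le_max_right B 0
      linarith
    refine ⟨max (lam * C0 * L ^ rM * (m + 1)) 1, fun w hw hnorm => ?_⟩
    obtain ⟨L0, hL0, hmod0⟩ := exists_scale hq1x hw
    have hne : {l : ℝ | 0 < l ∧ vModular μ q (fun x => w x / l) ≤ 1}.Nonempty :=
      ⟨L0, lt_of_lt_of_le one_pos hL0, hmod0⟩
    have hBL : B < L := by
      have := le_max_left B 0
      linarith
    have hlt : sInf {l : ℝ | 0 < l ∧ vModular μ q (fun x => w x / l) ≤ 1} < L :=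
      lt_of_le_of_lt hnorm hBL
    obtain ⟨l, hlS, hlL⟩ := exists_lt_of_csInf_lt hne hlt
    have hmodL : vModular μ q (fun x => w x / L) ≤ 1 :=
      le_trans (vModular_anti hq0 hlS.1 hlL.le) hlS.2
    obtain ⟨hBpos, hkey⟩ := key w hw.1 L hL1 hmodL
    exact csInf_le ⟨0, fun y hy => hy.1.le⟩ ⟨hBpos, hkey⟩
end

section
/- Let (X, μ) be a σ-finite measure space and p : X → ℝ measurable with 1 < p⁻ ≤ p(x) ≤ p⁺ < ∞. Suppose (wₙ) is a sequence in L^{p(x)}(X,μ) with wₙ → w a.e. on X and ∫_X |wₙ|^{p(x)} dμ → ∫_X |w|^{p(x)} dμ < ∞. Then ∫_X |wₙ - w|^{p(x)} dμ → 0, and hence wₙ → w in the Luxemburg norm of L^{p(x)}(X,μ). -/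
open MeasureTheory Filter

/-!
Since `|a - b|^q ≤ 2^{p⁺} (|a|^q + |b|^q)` for `0 ≤ q ≤ p⁺`, the functions
`gₙ = 2^{p⁺} (|wₙ|^{p(x)} + |w|^{p(x)})` dominate `|wₙ - w|^{p(x)}`, converge a.e. to
`2^{p⁺+1} |w|^{p(x)}`, and by hypothesis their integrals converge to the integral of that limit.
Fatou's lemma applied to `gₙ - |wₙ - w|^{p(x)}` then gives `ρ(wₙ - w) → 0` (the generalized
dominated convergence theorem). For `0 < λ ≤ 1` one has `ρ(u/λ) ≤ λ^{-p⁺} ρ(u)`, so a modular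
below `λ^{p⁺+1}` forces a Luxemburg norm at most `λ`.
-/

open Topology ENNReal

section GeneralizedDominatedConvergence

variable {α : Type*} [MeasurableSpace α] {μ : Measure α}

theorem tendsto_lintegral_zero_of_le_of_tendsto_lintegral {f g : ℕ → α → ℝ≥0∞} {G : α → ℝ≥0∞}
    (hf_meas : ∀ n, AEMeasurable (f n) μ) (hg_meas : ∀ n, AEMeasurable (g n) μ)
    (hfg : ∀ n, f n ≤ᵐ[μ] g n)
    (hf_lim : ∀ᵐ x ∂μ, Tendsto (fun n => f n x) atTop (𝓝 0))
    (hg_lim : ∀ᵐ x ∂μ, Tendsto (fun n => g n x) atTop (𝓝 (G x)))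
    (hG : ∫⁻ x, G x ∂μ ≠ ∞)
    (hg_int : Tendsto (fun n => ∫⁻ x, g n x ∂μ) atTop (𝓝 (∫⁻ x, G x ∂μ))) :
    Tendsto (fun n => ∫⁻ x, f n x ∂μ) atTop (𝓝 0) := by
  have hfatou : ∫⁻ x, G x ∂μ ≤ liminf (fun n => ∫⁻ x, g n x - f n x ∂μ) atTop := by
    calc ∫⁻ x, G x ∂μ = ∫⁻ x, liminf (fun n => g n x - f n x) atTop ∂μ := by
          refine lintegral_congr_ae ?_
          filter_upwards [hf_lim, hg_lim] with x hfx hgx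
          simpa using ((ENNReal.Tendsto.sub hgx hfx (Or.inr zero_ne_top)).liminf_eq).symm
      _ ≤ _ := lintegral_liminf_le' fun n => (hg_meas n).sub (hf_meas n)
  have hlimsup : limsup (fun n => ∫⁻ x, g n x - f n x ∂μ) atTop ≤ ∫⁻ x, G x ∂μ :=
    hg_int.limsup_eq ▸ limsup_le_limsup
      (Eventually.of_forall fun n => lintegral_mono fun x => tsub_le_self)
  have hdiff : Tendsto (fun n => ∫⁻ x, g n x - f n x ∂μ) atTop (𝓝 (∫⁻ x, G x ∂μ)) :=
    tendsto_of_le_liminf_of_limsup_le hfatou hlimsup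
  have hsplit : ∀ n, ∫⁻ x, f n x ∂μ + ∫⁻ x, g n x - f n x ∂μ = ∫⁻ x, g n x ∂μ := fun n => by
    rw [← lintegral_add_left' (hf_meas n)]
    refine lintegral_congr_ae ?_
    filter_upwards [hfg n] with x hx using add_tsub_cancel_of_le hx
  have hdiff_fin : ∀ᶠ n in atTop, ∫⁻ x, g n x - f n x ∂μ ≠ ∞ :=
    hdiff.eventually_ne hG
  have hsub := ENNReal.Tendsto.sub hg_int hdiff (Or.inl hG)
  rw [tsub_self] at hsub
  refine hsub.congr' ?_
  filter_upwards [hdiff_fin] with n hn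
  rw [← hsplit n, ENNReal.add_sub_cancel_right hn]

end GeneralizedDominatedConvergence

theorem abs_sub_rpow_le (a b : ℝ) {q : ℝ} (hq : 0 ≤ q) :
    |a - b| ^ q ≤ 2 ^ q * (|a| ^ q + |b| ^ q) := by
  have hab : |a - b| ≤ 2 * max |a| |b| := by
    linarith [abs_sub a b, le_max_left |a| |b|, le_max_right |a| |b|]
  calc |a - b| ^ q ≤ (2 * max |a| |b|) ^ q := Real.rpow_le_rpow (abs_nonneg _) hab hq
    _ = 2 ^ q * max (|a| ^ q) (|b| ^ q) := by
        rw [Real.mul_rpow zero_le_two (le_max_of_le_left (abs_nonneg a)),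
          Real.rpow_max (abs_nonneg a) (abs_nonneg b) hq]
    _ ≤ 2 ^ q * (|a| ^ q + |b| ^ q) := by
        gcongr
        exact max_le_add_of_nonneg (by positivity) (by positivity)

theorem tendsto_ofReal_abs_rpow {ι : Type*} {l : Filter ι} {u : ι → ℝ} {a q : ℝ}
    (hu : Tendsto u l (𝓝 a)) (hq : 0 < q) :
    Tendsto (fun i => ENNReal.ofReal (|u i| ^ q)) l (𝓝 (ENNReal.ofReal (|a| ^ q))) :=
  (ENNReal.continuous_ofReal.tendsto _).comp
    ((Real.continuousAt_rpow_const _ _ (Or.inr hq.le)).tendsto.comp hu.abs)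

section VariableExponent

variable {X : Type*} [MeasurableSpace X] {μ : Measure X} {p : X → ℝ} {pM : ℝ}

theorem aemeasurable_ofReal_abs_rpow (hp : AEMeasurable p μ) {u : X → ℝ}
    (hu : AEMeasurable u μ) : AEMeasurable (fun x => ENNReal.ofReal (|u x| ^ p x)) μ :=
  (hu.abs.pow hp).ennreal_ofReal

theorem tendsto_vModular_sub_zero (hp : AEMeasurable p μ) (hp_pos : ∀ x, 0 < p x)
    (hp_le : ∀ x, p x ≤ pM) {wn : ℕ → X → ℝ} {w : X → ℝ} (hwn : ∀ n, AEMeasurable (wn n) μ)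
    (hw : AEMeasurable w μ) (hae : ∀ᵐ x ∂μ, Tendsto (fun n => wn n x) atTop (𝓝 (w x)))
    (hfin : vModular μ p w ≠ ∞)
    (hmod : Tendsto (fun n => vModular μ p (wn n)) atTop (𝓝 (vModular μ p w))) :
    Tendsto (fun n => vModular μ p (fun x => wn n x - w x)) atTop (𝓝 0) := by
  set c := ENNReal.ofReal (2 ^ pM)
  let majorant : (X → ℝ) → X → ℝ≥0∞ := fun u x =>
    c * (ENNReal.ofReal (|u x| ^ p x) + ENNReal.ofReal (|w x| ^ p x))
  have hmajorant_int : ∀ u, AEMeasurable u μ →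
      ∫⁻ x, majorant u x ∂μ = c * (vModular μ p u + vModular μ p w) := fun u hu => by
    rw [lintegral_const_mul' _ _ ofReal_ne_top,
      lintegral_add_left' (aemeasurable_ofReal_abs_rpow hp hu)]
    rfl
  have hle : ∀ n x, ENNReal.ofReal (|wn n x - w x| ^ p x) ≤ majorant (wn n) x := fun n x => by
    show _ ≤ c * _
    rw [← ENNReal.ofReal_add (by positivity) (by positivity),
      ← ENNReal.ofReal_mul (by positivity)]
    refine ENNReal.ofReal_le_ofReal ((abs_sub_rpow_le _ _ (hp_pos x).le).trans ?_)
    gcongr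
    · exact one_le_two
    · exact hp_le x
  refine tendsto_lintegral_zero_of_le_of_tendsto_lintegral (G := majorant w)
    (fun n => aemeasurable_ofReal_abs_rpow hp ((hwn n).sub hw))
    (fun n => ((aemeasurable_ofReal_abs_rpow hp (hwn n)).add
      (aemeasurable_ofReal_abs_rpow hp hw)).const_mul c)
    (fun n => ae_of_all _ (hle n)) ?_ ?_ ?_ ?_
  · filter_upwards [hae] with x hx
    simpa [Real.zero_rpow (hp_pos x).ne'] using
      tendsto_ofReal_abs_rpow (hx.sub_const (w x)) (hp_pos x)
  · filter_upwards [hae] with x hx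
    exact ENNReal.Tendsto.const_mul
      ((tendsto_ofReal_abs_rpow hx (hp_pos x)).add_const _) (Or.inr ofReal_ne_top)
  · rw [hmajorant_int w hw]
    exact mul_ne_top ofReal_ne_top (add_ne_top.2 ⟨hfin, hfin⟩)
  · rw [hmajorant_int w hw]
    exact (ENNReal.Tendsto.const_mul (hmod.add_const _) (Or.inr ofReal_ne_top)).congr
      fun n => (hmajorant_int _ (hwn n)).symm

theorem vModular_div_le (hp_le : ∀ x, p x ≤ pM) (u : X → ℝ) {l : ℝ} (hl0 : 0 < l)
    (hl1 : l ≤ 1) :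
    vModular μ p (fun x => u x / l) ≤ ENNReal.ofReal (l ^ pM)⁻¹ * vModular μ p u := by
  rw [vModular, vModular, ← lintegral_const_mul' _ _ ofReal_ne_top]
  refine lintegral_mono fun x => ?_
  rw [← ENNReal.ofReal_mul (by positivity), abs_div, abs_of_pos hl0,
    Real.div_rpow (abs_nonneg _) hl0.le, div_eq_inv_mul]
  refine ENNReal.ofReal_le_ofReal (mul_le_mul_of_nonneg_right ?_ (by positivity))
  exact inv_anti₀ (by positivity) (Real.rpow_le_rpow_of_exponent_ge hl0 hl1 (hp_le x))

theorem luxNorm_nonneg (u : X → ℝ) : 0 ≤ luxNorm μ p u :=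
  Real.sInf_nonneg fun _ hl => hl.1.le

theorem luxNorm_le_of_vModular_le (hp_le : ∀ x, p x ≤ pM) {u : X → ℝ} {l : ℝ} (hl0 : 0 < l)
    (hl1 : l ≤ 1) (hu : vModular μ p u ≤ ENNReal.ofReal (l ^ (pM + 1))) :
    luxNorm μ p u ≤ l := by
  refine csInf_le ⟨0, fun _ hk => hk.1.le⟩ ⟨hl0, ?_⟩
  calc vModular μ p (fun x => u x / l)
      ≤ ENNReal.ofReal (l ^ pM)⁻¹ * ENNReal.ofReal (l ^ (pM + 1)) :=
        (vModular_div_le hp_le u hl0 hl1).trans (by gcongr)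
    _ = ENNReal.ofReal l := by
        rw [← ENNReal.ofReal_mul (by positivity), Real.rpow_add hl0, Real.rpow_one,
          inv_mul_cancel_left₀ (Real.rpow_pos_of_pos hl0 _).ne']
    _ ≤ 1 := ENNReal.ofReal_le_one.2 hl1

theorem tendsto_luxNorm_zero_of_tendsto_vModular_zero (hp_le : ∀ x, p x ≤ pM) {ι : Type*}
    {L : Filter ι} {u : ι → X → ℝ} (hu : Tendsto (fun i => vModular μ p (u i)) L (𝓝 0)) :
    Tendsto (fun i => luxNorm μ p (u i)) L (𝓝 0) := by
  refine tendsto_order.2 ⟨fun a ha => Eventually.of_forall fun i =>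
    ha.trans_le (luxNorm_nonneg _), fun ε hε => ?_⟩
  obtain ⟨l, hl0, hlε⟩ := exists_between hε
  have hl0' : 0 < min l 1 := lt_min hl0 one_pos
  filter_upwards [hu.eventually_lt_const (ofReal_pos.2 (Real.rpow_pos_of_pos hl0' (pM + 1)))]
    with i hi
  exact (luxNorm_le_of_vModular_le hp_le hl0' (min_le_right _ _) hi.le).trans_lt
    ((min_le_left _ _).trans_lt hlε)

end VariableExponent

theorem brezis_lieb_variable_exponent_general {X : Type*} [MeasurableSpace X]
    (μ : Measure X)
    (p : X → ℝ) (pm pM : ℝ) (hp : Measurable p)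
    (hpm : 1 < pm) (hbd : ∀ x, pm ≤ p x ∧ p x ≤ pM)
    (wn : ℕ → X → ℝ) (w : X → ℝ)
    (hwn : ∀ n, MemLp' μ p (wn n)) (hw : Measurable w)
    (hae : ∀ᵐ x ∂μ, Tendsto (fun n => wn n x) atTop (nhds (w x)))
    (hfin : vModular μ p w < ⊤)
    (hmod : Tendsto (fun n => vModular μ p (wn n)) atTop (nhds (vModular μ p w))) :
    Tendsto (fun n => vModular μ p (fun x => wn n x - w x)) atTop (nhds 0) ∧
      Tendsto (fun n => luxNorm μ p (fun x => wn n x - w x)) atTop (nhds 0) := by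
  have hp_pos : ∀ x, 0 < p x := fun x => (zero_lt_one.trans hpm).trans_le (hbd x).1
  have hp_le : ∀ x, p x ≤ pM := fun x => (hbd x).2
  have hmod_sub := tendsto_vModular_sub_zero hp.aemeasurable hp_pos hp_le
    (fun n => (hwn n).1.aemeasurable) hw.aemeasurable hae hfin.ne hmod
  exact ⟨hmod_sub, tendsto_luxNorm_zero_of_tendsto_vModular_zero hp_le hmod_sub⟩

/-- Brezis–Lieb type lemma in variable exponent Lebesgue spaces: if `wₙ → w`
a.e. and the modulars converge, `ρ(wₙ) → ρ(w) < ∞`, then `ρ(wₙ - w) → 0` and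
`wₙ → w` in the Luxemburg norm. -/
theorem brezis_lieb_variable_exponent {X : Type*} [MeasurableSpace X]
    (μ : Measure X) [SigmaFinite μ]
    (p : X → ℝ) (pm pM : ℝ) (hp : Measurable p)
    (hpm : 1 < pm) (hbd : ∀ x, pm ≤ p x ∧ p x ≤ pM)
    (wn : ℕ → X → ℝ) (w : X → ℝ)
    (hwn : ∀ n, MemLp' μ p (wn n)) (hw : Measurable w)
    (hae : ∀ᵐ x ∂μ, Tendsto (fun n => wn n x) atTop (nhds (w x)))
    (hfin : vModular μ p w < ⊤)
    (hmod : Tendsto (fun n => vModular μ p (wn n)) atTop (nhds (vModular μ p w))) :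
    Tendsto (fun n => vModular μ p (fun x => wn n x - w x)) atTop (nhds 0) ∧
      Tendsto (fun n => luxNorm μ p (fun x => wn n x - w x)) atTop (nhds 0) :=
  brezis_lieb_variable_exponent_general μ p pm pM hp hpm hbd wn w hwn hw hae hfin hmod
end
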